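/- arXiv:2309.14607 — 4 statements merged into one kernel-verified Lean document; each statement's English description precedes it below -/
import Mathlib

section
/- Let X be a quasi-Banach space over 𝔽 = ℝ or ℂ and let 𝒳 = (x_n)_{n∈ℕ} be a basis of X. Then 𝒳 is greedy if and only if 𝒳 is relaxed greedy for polynomials with constant coefficients (RGPCC), i.e., there exists C > 0 such that ‖f − P_A(f)‖ ≤ C·ρ_m(f) for every f ∈ X, every m ∈ ℕ, and every greedy set A of f of cardinality m. -/
open scoped BigOperators

noncomputable section

/-- A basis of a quasi-Banach space over `𝕜` (`𝕜 = ℝ` or `ℂ`), bundled with the quasi-norm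
`N`, the basis vectors `e`, and the biorthogonal functionals `coord`. -/
structure QBasis (𝕜 : Type*) [RCLike 𝕜] (X : Type*) [AddCommGroup X] [Module 𝕜 X] :
    Type _ where
  /-- the quasi-norm of the space -/
  N : X → ℝ
  N_nonneg : ∀ f : X, 0 ≤ N f
  N_eq_zero_iff : ∀ f : X, N f = 0 ↔ f = 0
  N_smul : ∀ (t : 𝕜) (f : X), N (t • f) = ‖t‖ * N f
  quasi_triangle : ∃ c : ℝ, 1 ≤ c ∧ ∀ f g : X, N (f + g) ≤ c * (N f + N g)
  /-- completeness with respect to the quasi-norm -/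
  complete : ∀ u : ℕ → X,
      (∀ ε : ℝ, 0 < ε → ∃ n₀ : ℕ, ∀ m n : ℕ, n₀ ≤ m → n₀ ≤ n → N (u m - u n) < ε) →
      ∃ f : X, ∀ ε : ℝ, 0 < ε → ∃ n₀ : ℕ, ∀ n : ℕ, n₀ ≤ n → N (u n - f) < ε
  /-- the basis vectors -/
  e : ℕ → X
  /-- the biorthogonal functionals -/
  coord : ℕ → X →ₗ[𝕜] 𝕜
  biorth : ∀ n m : ℕ, coord n (e m) = if n = m then (1 : 𝕜) else 0
  /-- the closed linear span of the basis vectors is the whole space -/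
  dense_span : ∀ f : X, ∀ ε : ℝ, 0 < ε →
      ∃ g ∈ Submodule.span 𝕜 (Set.range e), N (f - g) < ε
  e_bdd : ∃ c : ℝ, ∀ n : ℕ, N (e n) ≤ c
  coord_bdd : ∃ c : ℝ, ∀ (n : ℕ) (f : X), ‖coord n f‖ ≤ c * N f

namespace QBasis

variable {𝕜 : Type*} [RCLike 𝕜] {X : Type*} [AddCommGroup X] [Module 𝕜 X]

/-- The projection `P_A f = ∑_{n ∈ A} x_n^*(f) x_n`. -/
def proj (bs : QBasis 𝕜 X) (A : Finset ℕ) (f : X) : X :=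
  ∑ n ∈ A, bs.coord n f • bs.e n

/-- `A` is a greedy set of `f`: `min_{n ∈ A} |x_n^*(f)| ≥ max_{m ∉ A} |x_m^*(f)|`. -/
def IsGreedySet (bs : QBasis 𝕜 X) (f : X) (A : Finset ℕ) : Prop :=
  ∀ n ∈ A, ∀ m : ℕ, m ∉ A → ‖bs.coord m f‖ ≤ ‖bs.coord n f‖

/-- `𝟙_{ε,A} = ∑_{j ∈ A} ε_j x_j`. -/
def indSign (bs : QBasis 𝕜 X) (ε : ℕ → 𝕜) (A : Finset ℕ) : X :=
  ∑ j ∈ A, ε j • bs.e j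

/-- `𝟙_A = ∑_{j ∈ A} x_j`. -/
def ind (bs : QBasis 𝕜 X) (A : Finset ℕ) : X := ∑ j ∈ A, bs.e j

/-- `ε` is a sign on `A`. -/
def IsSign (ε : ℕ → 𝕜) (A : Finset ℕ) : Prop := ∀ j ∈ A, ‖ε j‖ = 1

/-- `min_{n ∈ A} |x_n^*(f)|`. -/
def minCoef (bs : QBasis 𝕜 X) (f : X) (A : Finset ℕ) : ℝ :=
  sInf ((fun n => ‖bs.coord n f‖) '' (A : Set ℕ))

/-- `‖f − P_A(f)‖ ≤ C·σ_m(f)` for every greedy set `A` of cardinality `m`. -/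
def IsGreedyWith (bs : QBasis 𝕜 X) (C : ℝ) : Prop :=
  ∀ (f : X) (A B : Finset ℕ) (a : ℕ → 𝕜), bs.IsGreedySet f A → B.card ≤ A.card →
    bs.N (f - bs.proj A f) ≤ C * bs.N (f - ∑ j ∈ B, a j • bs.e j)

/-- `‖f − P_A(f)‖ ≤ C·ρ_m(f)` for every greedy set `A` of cardinality `m`, where
`ρ_m(f) = inf {‖f − α 𝟙_{ε,B}‖ : |B| = m, ε sign}` and `α = min_{n ∈ A} |x_n^*(f)|`. -/
def IsRGPCCWith (bs : QBasis 𝕜 X) (C : ℝ) : Prop :=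
  ∀ (f : X) (A B : Finset ℕ) (ε : ℕ → 𝕜), bs.IsGreedySet f A → B.card = A.card →
    IsSign ε B →
    bs.N (f - bs.proj A f) ≤ C * bs.N (f - ((bs.minCoef f A : ℝ) : 𝕜) • bs.indSign ε B)

/-- `‖f − P_A(f)‖ ≤ C·ϱ_m(f)` for every greedy set `A` of cardinality `m`, where
`ϱ_m(f) = inf {‖f − α 𝟙_B‖ : |B| = m}` and `α = min_{n ∈ A} |x_n^*(f)|`. -/
def IsURGPCCWith (bs : QBasis 𝕜 X) (C : ℝ) : Prop :=
  ∀ (f : X) (A B : Finset ℕ), bs.IsGreedySet f A → B.card = A.card →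
    bs.N (f - bs.proj A f) ≤ C * bs.N (f - ((bs.minCoef f A : ℝ) : 𝕜) • bs.ind B)

end QBasis

/-!
Greedy trivially implies RGPCC. Conversely, RGPCC first gives suppression unconditionality:
shifting the coefficients of `f` on `D` along their phases makes `D` greedy, so `‖f - P_D f‖` is
controlled by `‖f - α 𝟙_{ε,D}‖`, and `α` becomes arbitrarily small once `D` is enlarged by an
index where `f` has a tiny coefficient. Now let `A` be a greedy set of `f`, `|B| ≤ |A|` and
`g = f - ∑_{j ∈ B} a_j x_j`, so that `f - P_A f = (g - P_{A ∪ B} g) + P_{B \ A} f`. The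
coefficients of `f` on `B \ A` are at most `α = min_{n ∈ A} |x_n^*(f)|`, which is at most every
coefficient of `g` on `A \ B`; applying RGPCC to `P_S g + α 𝟙_{ε,T}` with `S ⊆ A \ B`,
`|S| = |T|` shows that `‖α 𝟙_{ε,T}‖ ≲ ‖P_S g‖ ≲ ‖g‖` for every `T ⊆ B \ A`. Without local
convexity, such a bound on the sums `∑_{j ∈ T} v_j` still passes to the sums `∑ t_j v_j` with
`t_j ∈ [0, 1]`: split `m t_j`, for an integer `m ≥ 2c`, into an integer digit and a remainder in
`[0, 1]`, and compare with the supremum over all such sums.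
-/

open Finset

namespace RCLike

variable {𝕜 : Type*} [RCLike 𝕜]

def phase (z : 𝕜) : 𝕜 := if z = 0 then 1 else z / (‖z‖ : 𝕜)

lemma norm_phase (z : 𝕜) : ‖phase z‖ = 1 := by
  unfold phase
  split_ifs with h
  · exact norm_one
  · rw [norm_div, norm_ofReal, abs_norm, div_self (norm_ne_zero_iff.mpr h)]

lemma norm_mul_phase (z : 𝕜) : (‖z‖ : 𝕜) * phase z = z := by
  unfold phase
  split_ifs with h
  · simp [h]
  · exact mul_div_cancel₀ z (ofReal_ne_zero.mpr (norm_ne_zero_iff.mpr h))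

end RCLike

/-- The supremum `Φ` of `φ` satisfies `Φ ≤ r (G + Φ)`. -/
lemma le_of_forall_exists_le_mul_add {ι : Type*} {φ : ι → ℝ} {r G : ℝ}
    (hφ : BddAbove (Set.range φ)) (hr0 : 0 ≤ r) (hr : r ≤ 1 / 2) (hG : 0 ≤ G)
    (h : ∀ i, ∃ j, φ i ≤ r * (G + φ j)) (i : ι) : φ i ≤ G := by
  have : Nonempty ι := ⟨i⟩
  have hsup : ⨆ i, φ i ≤ r * (G + ⨆ i, φ i) := ciSup_le fun i => by
    obtain ⟨j, hj⟩ := h i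
    exact hj.trans (by gcongr; exact le_ciSup hφ j)
  have : ⨆ i, φ i ≤ G := by nlinarith
  exact (le_ciSup hφ i).trans this

namespace QBasis

variable {𝕜 : Type*} [RCLike 𝕜] {X : Type*} [AddCommGroup X] [Module 𝕜 X] (bs : QBasis 𝕜 X)

def qc : ℝ := bs.quasi_triangle.choose

lemma one_le_qc : 1 ≤ bs.qc := bs.quasi_triangle.choose_spec.1

lemma qc_pos : 0 < bs.qc := zero_lt_one.trans_le bs.one_le_qc

lemma N_add_le (f g : X) : bs.N (f + g) ≤ bs.qc * (bs.N f + bs.N g) :=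
  bs.quasi_triangle.choose_spec.2 f g

lemma N_zero : bs.N 0 = 0 := (bs.N_eq_zero_iff 0).2 rfl

lemma N_neg (f : X) : bs.N (-f) = bs.N f := by simpa using bs.N_smul (-1) f

lemma N_sub_le (f g : X) : bs.N (f - g) ≤ bs.qc * (bs.N f + bs.N g) := by
  simpa [sub_eq_add_neg, bs.N_neg] using bs.N_add_le f (-g)

lemma N_ofReal_smul {t : ℝ} (ht : 0 ≤ t) (f : X) : bs.N ((t : 𝕜) • f) = t * bs.N f := by
  rw [bs.N_smul, RCLike.norm_ofReal, abs_of_nonneg ht]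

lemma N_sum_le {ι : Type*} (S : Finset ι) (v : ι → X) :
    bs.N (∑ j ∈ S, v j) ≤ bs.qc ^ S.card * ∑ j ∈ S, bs.N (v j) := by
  induction S using Finset.cons_induction with
  | empty => simp [bs.N_zero]
  | cons a S ha ih =>
    have hpow : 1 ≤ bs.qc ^ S.card := one_le_pow₀ bs.one_le_qc
    have := bs.qc_pos
    rw [sum_cons, sum_cons, card_cons, pow_succ']
    calc bs.N (v a + ∑ j ∈ S, v j) ≤ bs.qc * (bs.N (v a) + bs.N (∑ j ∈ S, v j)) :=
          bs.N_add_le _ _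
      _ ≤ bs.qc * (bs.qc ^ S.card * bs.N (v a) + bs.qc ^ S.card * ∑ j ∈ S, bs.N (v j)) := by
          gcongr
          exact le_mul_of_one_le_left (bs.N_nonneg _) hpow
      _ = _ := by ring

lemma N_indSign_le {ε : ℕ → 𝕜} {A : Finset ℕ} (hε : IsSign ε A) :
    bs.N (bs.indSign ε A) ≤ bs.qc ^ A.card * ∑ j ∈ A, bs.N (bs.e j) := by
  refine (bs.N_sum_le A _).trans_eq ?_
  congr 1
  exact sum_congr rfl fun j hj => by rw [bs.N_smul, hε j hj, one_mul]

lemma coord_sum_smul (B : Finset ℕ) (a : ℕ → 𝕜) (n : ℕ) :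
    bs.coord n (∑ j ∈ B, a j • bs.e j) = if n ∈ B then a n else 0 := by
  simp [bs.biorth]

lemma proj_sum_smul_of_subset {B D : Finset ℕ} (hBD : B ⊆ D) (a : ℕ → 𝕜) :
    bs.proj D (∑ j ∈ B, a j • bs.e j) = ∑ j ∈ B, a j • bs.e j := by
  simp only [proj, coord_sum_smul, ite_smul, zero_smul, sum_ite_mem, inter_eq_right.mpr hBD]

lemma proj_add (D : Finset ℕ) (f g : X) : bs.proj D (f + g) = bs.proj D f + bs.proj D g := by
  simp [proj, add_smul, sum_add_distrib]

lemma proj_sub (D : Finset ℕ) (f g : X) : bs.proj D (f - g) = bs.proj D f - bs.proj D g := by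
  simp [proj, sub_smul, sum_sub_distrib]

lemma proj_smul (D : Finset ℕ) (t : 𝕜) (f : X) : bs.proj D (t • f) = t • bs.proj D f := by
  simp [proj, smul_sum, smul_smul]

lemma exists_notMem_norm_coord_lt (f : X) (D : Finset ℕ) {δ : ℝ} (hδ : 0 < δ) :
    ∃ k ∉ D, ‖bs.coord k f‖ < δ := by
  obtain ⟨κ, hκ⟩ := bs.coord_bdd
  have hκ' : 0 < max κ 1 := zero_lt_one.trans_le (le_max_right _ _)
  obtain ⟨g, hg, hfg⟩ := bs.dense_span f (δ / max κ 1) (div_pos hδ hκ')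
  obtain ⟨a, rfl⟩ := Finsupp.mem_span_range_iff_exists_finsupp.mp hg
  obtain ⟨k, hk⟩ := Infinite.exists_notMem_finset (D ∪ a.support)
  rw [mem_union, not_or] at hk
  refine ⟨k, hk.1, ?_⟩
  have hgk : bs.coord k (a.sum fun i c => c • bs.e i) = 0 := by
    rw [Finsupp.sum, coord_sum_smul, if_neg hk.2]
  calc ‖bs.coord k f‖ = ‖bs.coord k (f - a.sum fun i c => c • bs.e i)‖ := by
        rw [map_sub, hgk, sub_zero]
    _ ≤ max κ 1 * bs.N (f - a.sum fun i c => c • bs.e i) :=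
        (hκ k _).trans (mul_le_mul_of_nonneg_right (le_max_left _ _) (bs.N_nonneg _))
    _ < max κ 1 * (δ / max κ 1) := by gcongr
    _ = δ := mul_div_cancel₀ δ hκ'.ne'

lemma minCoef_eq_inf' (f : X) {D : Finset ℕ} (hD : D.Nonempty) :
    bs.minCoef f D = D.inf' hD (‖bs.coord · f‖) := by
  rw [minCoef, inf'_eq_csInf_image]

lemma minCoef_le (f : X) {D : Finset ℕ} {j : ℕ} (hj : j ∈ D) : bs.minCoef f D ≤ ‖bs.coord j f‖ := by
  rw [bs.minCoef_eq_inf' f ⟨j, hj⟩]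
  exact inf'_le _ hj

lemma le_minCoef (f : X) {D : Finset ℕ} (hD : D.Nonempty) {b : ℝ}
    (h : ∀ j ∈ D, b ≤ ‖bs.coord j f‖) : b ≤ bs.minCoef f D := by
  rw [bs.minCoef_eq_inf' f hD]
  exact le_inf' hD _ h

lemma minCoef_nonneg (f : X) (D : Finset ℕ) : 0 ≤ bs.minCoef f D := by
  rcases D.eq_empty_or_nonempty with rfl | hD
  · simp [minCoef]
  · exact bs.le_minCoef f hD fun _ _ => norm_nonneg _

lemma minCoef_eq_add {f g : X} {D : Finset ℕ} (hD : D.Nonempty) {t : ℝ}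
    (h : ∀ j ∈ D, ‖bs.coord j g‖ = ‖bs.coord j f‖ + t) :
    bs.minCoef g D = bs.minCoef f D + t := by
  rw [bs.minCoef_eq_inf' g hD, bs.minCoef_eq_inf' f hD,
    apply_inf'_eq_inf'_comp hD (· + t) fun x y => (min_add_add_right x y t).symm]
  exact inf'_congr hD rfl h

lemma sub_proj_eq (f : X) (A B : Finset ℕ) (a : ℕ → 𝕜) :
    f - bs.proj A f = (f - ∑ j ∈ B, a j • bs.e j) - bs.proj (A ∪ B) (f - ∑ j ∈ B, a j • bs.e j)
      + bs.proj (B \ A) f := by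
  have hunion : bs.proj (A ∪ B) f = bs.proj A f + bs.proj (B \ A) f := by
    rw [proj, proj, proj, ← sum_union disjoint_sdiff, union_sdiff_self_eq_union]
  rw [proj_sub, proj_sum_smul_of_subset _ subset_union_right, hunion]
  abel

variable {bs}

lemma isRGPCCWith_of_isGreedyWith {C : ℝ} (hG : bs.IsGreedyWith C) : bs.IsRGPCCWith C := by
  intro f A B ε hA hcard _
  have hsum : ∑ j ∈ B, ((bs.minCoef f A : 𝕜) * ε j) • bs.e j =
      (bs.minCoef f A : 𝕜) • bs.indSign ε B := by
    simp only [indSign, smul_sum, smul_smul]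
  simpa only [hsum] using hG f A B (fun j => (bs.minCoef f A : 𝕜) * ε j) hA hcard.le

/-- Adding `t • 𝟙_{ε,D}` along the phases `ε` of `f`, for `t` above every coefficient of `f`,
makes `D` a greedy set and shifts its smallest coefficient by `t`. -/
lemma N_sub_proj_le_N_sub_minCoef_smul {C : ℝ} (hRG : bs.IsRGPCCWith C) (f : X)
    {D : Finset ℕ} (hD : D.Nonempty) :
    bs.N (f - bs.proj D f) ≤
      C * bs.N (f - (bs.minCoef f D : 𝕜) • bs.indSign (fun j => RCLike.phase (bs.coord j f)) D) := by
  obtain ⟨κ, hκ⟩ := bs.coord_bdd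
  set ε : ℕ → 𝕜 := fun j => RCLike.phase (bs.coord j f)
  set t : ℝ := max (κ * bs.N f) 0
  set g := f + (t : 𝕜) • bs.indSign ε D with hg
  have hcoord (n : ℕ) : bs.coord n g = bs.coord n f + if n ∈ D then (t : 𝕜) * ε n else 0 := by
    rw [map_add, map_smul, indSign, coord_sum_smul, smul_eq_mul, mul_ite, mul_zero]
  have hnormD : ∀ n ∈ D, ‖bs.coord n g‖ = ‖bs.coord n f‖ + t := by
    intro n hn
    have : bs.coord n g = ((‖bs.coord n f‖ + t : ℝ) : 𝕜) * ε n := by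
      rw [hcoord, if_pos hn, RCLike.ofReal_add, add_mul, RCLike.norm_mul_phase]
    rw [this, norm_mul, RCLike.norm_phase, mul_one, RCLike.norm_ofReal,
      abs_of_nonneg (by positivity)]
  have hgreedy : bs.IsGreedySet g D := by
    intro n hn m hm
    rw [hnormD n hn, hcoord, if_neg hm, add_zero]
    calc ‖bs.coord m f‖ ≤ t := (hκ m f).trans (le_max_left _ _)
      _ ≤ ‖bs.coord n f‖ + t := le_add_of_nonneg_left (norm_nonneg _)
  have h := hRG g D D ε hgreedy rfl fun j _ => RCLike.norm_phase _
  have hproj : g - bs.proj D g = f - bs.proj D f := by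
    rw [hg, proj_add, proj_smul, indSign, proj_sum_smul_of_subset _ subset_rfl]
    abel
  have hshift : g - ((bs.minCoef f D + t : ℝ) : 𝕜) • bs.indSign ε D =
      f - (bs.minCoef f D : 𝕜) • bs.indSign ε D := by
    rw [hg, RCLike.ofReal_add, add_smul]
    abel
  rwa [hproj, bs.minCoef_eq_add hD hnormD, hshift] at h

lemma N_sub_proj_le_of_notMem {C : ℝ} (hC : 0 ≤ C) (hRG : bs.IsRGPCCWith C) (f : X)
    {D : Finset ℕ} {k : ℕ} (hk : k ∉ D) :
    bs.N (f - bs.proj D f) ≤ bs.qc ^ 2 * C * bs.N f + ‖bs.coord k f‖ * (bs.qc * (bs.qc * C *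
      bs.N (bs.indSign (fun j => RCLike.phase (bs.coord j f)) (insert k D)) + bs.N (bs.e k))) := by
  have hq := bs.qc_pos
  have hsplit : f - bs.proj D f = (f - bs.proj (insert k D) f) + bs.coord k f • bs.e k := by
    rw [proj, proj, sum_insert hk]
    abel
  have hinsert : bs.N (f - bs.proj (insert k D) f) ≤ C * (bs.qc * (bs.N f + ‖bs.coord k f‖ *
      bs.N (bs.indSign (fun j => RCLike.phase (bs.coord j f)) (insert k D)))) := by
    refine (N_sub_proj_le_N_sub_minCoef_smul hRG f (insert_nonempty k D)).trans ?_
    gcongr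
    refine (bs.N_sub_le _ _).trans ?_
    rw [bs.N_ofReal_smul (bs.minCoef_nonneg f _)]
    gcongr
    · exact bs.N_nonneg _
    · exact bs.minCoef_le f (mem_insert_self k D)
  calc bs.N (f - bs.proj D f)
      ≤ bs.qc * (bs.N (f - bs.proj (insert k D) f) + bs.N (bs.coord k f • bs.e k)) := by
        rw [hsplit]; exact bs.N_add_le _ _
    _ ≤ _ := by
        rw [bs.N_smul]
        grw [hinsert]
        exact le_of_eq (by ring)

lemma N_sub_proj_le {C : ℝ} (hC : 0 ≤ C) (hRG : bs.IsRGPCCWith C) (f : X) (D : Finset ℕ) :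
    bs.N (f - bs.proj D f) ≤ bs.qc ^ 2 * C * bs.N f := by
  obtain ⟨M, hM⟩ := bs.e_bdd
  have hM0 : 0 ≤ M := (bs.N_nonneg _).trans (hM 0)
  have hq := bs.qc_pos
  have hD := sum_nonneg fun j (_ : j ∈ D) => bs.N_nonneg (bs.e j)
  set L := bs.qc * (bs.qc * C * (bs.qc ^ (D.card + 1) * (∑ j ∈ D, bs.N (bs.e j) + M)) + M) with hLdef
  have hL : 0 ≤ L := by positivity
  have key : ∀ k ∉ D, bs.N (f - bs.proj D f) ≤ bs.qc ^ 2 * C * bs.N f + ‖bs.coord k f‖ * L := by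
    intro k hk
    refine (N_sub_proj_le_of_notMem hC hRG f hk).trans ?_
    have hind := bs.N_indSign_le (fun j _ => RCLike.norm_phase (bs.coord j f)) (A := insert k D)
    rw [card_insert_of_notMem hk, sum_insert hk] at hind
    gcongr
    rw [hLdef]
    gcongr
    · exact hind.trans (mul_le_mul_of_nonneg_left (by linarith [hM k]) (by positivity))
    · exact hM k
  refine le_of_forall_pos_le_add fun δ hδ => ?_
  obtain ⟨k, hk, hkδ⟩ := bs.exists_notMem_norm_coord_lt f D (div_pos hδ (by linarith : 0 < L + 1))
  calc bs.N (f - bs.proj D f) ≤ bs.qc ^ 2 * C * bs.N f + ‖bs.coord k f‖ * L := key k hk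
    _ ≤ bs.qc ^ 2 * C * bs.N f + δ / (L + 1) * (L + 1) := by gcongr; linarith
    _ = bs.qc ^ 2 * C * bs.N f + δ := by rw [div_mul_cancel₀ _ (by linarith)]

lemma N_proj_le {C : ℝ} (hC : 0 ≤ C) (hRG : bs.IsRGPCCWith C) (f : X) (D : Finset ℕ) :
    bs.N (bs.proj D f) ≤ bs.qc * (1 + bs.qc ^ 2 * C) * bs.N f := by
  calc bs.N (bs.proj D f) = bs.N (f - (f - bs.proj D f)) := by rw [sub_sub_cancel]
    _ ≤ bs.qc * (bs.N f + bs.N (f - bs.proj D f)) := bs.N_sub_le _ _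
    _ ≤ bs.qc * (bs.N f + bs.qc ^ 2 * C * bs.N f) := by
        gcongr
        · exact bs.qc_pos.le
        · exact N_sub_proj_le hC hRG f D
    _ = bs.qc * (1 + bs.qc ^ 2 * C) * bs.N f := by ring

/-- `S` is a greedy set of `P_S g + α 𝟙_{δ,E}`, where `α` is the smallest coefficient of `g`
on `S`. -/
lemma minCoef_mul_N_indSign_le {C : ℝ} (hRG : bs.IsRGPCCWith C) (g : X) {S E : Finset ℕ}
    (hS : S.Nonempty) (hSE : Disjoint S E) (hcard : E.card = S.card) {δ : ℕ → 𝕜}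
    (hδ : IsSign δ E) :
    bs.minCoef g S * bs.N (bs.indSign δ E) ≤ C * bs.N (bs.proj S g) := by
  set μ := bs.minCoef g S
  set w := bs.proj S g + (μ : 𝕜) • bs.indSign δ E
  have hcoord (n : ℕ) : bs.coord n w =
      (if n ∈ S then bs.coord n g else 0) + if n ∈ E then (μ : 𝕜) * δ n else 0 := by
    rw [map_add, map_smul, proj, indSign, coord_sum_smul, coord_sum_smul, smul_eq_mul, mul_ite,
      mul_zero]
  have hwS : ∀ n ∈ S, bs.coord n w = bs.coord n g := fun n hn => by
    rw [hcoord, if_pos hn, if_neg (disjoint_left.mp hSE hn), add_zero]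
  have hgreedy : bs.IsGreedySet w S := by
    intro n hn m hm
    rw [hwS n hn, hcoord, if_neg hm, zero_add]
    split_ifs with hmE
    · rw [norm_mul, hδ m hmE, mul_one, RCLike.norm_ofReal, abs_of_nonneg (bs.minCoef_nonneg g S)]
      exact bs.minCoef_le g hn
    · simp
  have hmin : bs.minCoef w S = μ := by
    simpa using bs.minCoef_eq_add (t := 0) hS fun j hj => by rw [hwS j hj, add_zero]
  have hproj : bs.proj S w = bs.proj S g := sum_congr rfl fun n hn => by rw [hwS n hn]
  have h := hRG w S E δ hgreedy hcard hδ
  rwa [hmin, hproj, add_sub_cancel_left, add_sub_cancel_right,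
    bs.N_ofReal_smul (bs.minCoef_nonneg g S)] at h

lemma minCoef_mul_N_indSign_le_of_subset_sdiff {C : ℝ} (hC : 0 ≤ C) (hRG : bs.IsRGPCCWith C)
    (f : X) {A B T : Finset ℕ} (a : ℕ → 𝕜) (hBA : B.card ≤ A.card) (hT : T ⊆ B \ A)
    {ε : ℕ → 𝕜} (hε : IsSign ε T) :
    bs.minCoef f A * bs.N (bs.indSign ε T) ≤
      C * (bs.qc * (1 + bs.qc ^ 2 * C)) * bs.N (f - ∑ j ∈ B, a j • bs.e j) := by
  set g := f - ∑ j ∈ B, a j • bs.e j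
  have hq := bs.qc_pos
  rcases T.eq_empty_or_nonempty with rfl | hTne
  · have := bs.N_nonneg g
    simp only [indSign, sum_empty, bs.N_zero, mul_zero]
    positivity
  obtain ⟨S, hSsub, hScard⟩ := exists_subset_card_eq
    ((card_le_card hT).trans (card_sdiff_le_card_sdiff_iff.mpr hBA))
  have hSne : S.Nonempty := by rw [← card_pos, hScard, card_pos]; exact hTne
  have hα : bs.minCoef f A ≤ bs.minCoef g S := by
    refine bs.le_minCoef g hSne fun j hj => ?_
    obtain ⟨hjA, hjB⟩ := mem_sdiff.mp (hSsub hj)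
    rw [map_sub, coord_sum_smul, if_neg hjB, sub_zero]
    exact bs.minCoef_le f hjA
  have hST : Disjoint S T := disjoint_sdiff_sdiff.mono hSsub hT
  calc bs.minCoef f A * bs.N (bs.indSign ε T) ≤ bs.minCoef g S * bs.N (bs.indSign ε T) := by
        gcongr
        exact bs.N_nonneg _
    _ ≤ C * bs.N (bs.proj S g) := minCoef_mul_N_indSign_le hRG g hSne hST hScard.symm hε
    _ ≤ C * (bs.qc * (1 + bs.qc ^ 2 * C) * bs.N g) := by gcongr; exact N_proj_le hC hRG g S
    _ = _ := by ring

variable (bs)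

lemma N_sum_natCast_smul_le (S : Finset ℕ) (v : ℕ → X) {K : ℝ}
    (hK : ∀ T ⊆ S, bs.N (∑ j ∈ T, v j) ≤ K) {m : ℕ} {d : ℕ → ℕ} (hd : ∀ j ∈ S, d j ≤ m) :
    bs.N (∑ j ∈ S, (d j : 𝕜) • v j) ≤ bs.qc ^ m * (m * K) := by
  have hdigits : ∑ j ∈ S, (d j : 𝕜) • v j = ∑ i ∈ range m, ∑ j ∈ S with i < d j, v j := by
    simp only [sum_filter]
    rw [sum_comm]
    refine sum_congr rfl fun j hj => ?_
    have hcount : ((range m).filter (· < d j)).card = d j := by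
      rw [show (range m).filter (· < d j) = range (d j) by
        ext i; simp only [mem_filter, mem_range]; have := hd j hj; omega,
        card_range]
    rw [← sum_filter, sum_const, hcount, Nat.cast_smul_eq_nsmul]
  rw [hdigits]
  calc bs.N (∑ i ∈ range m, ∑ j ∈ S with i < d j, v j)
      ≤ bs.qc ^ m * ∑ i ∈ range m, bs.N (∑ j ∈ S with i < d j, v j) := by
        simpa using bs.N_sum_le (range m) _
    _ ≤ bs.qc ^ m * ∑ _i ∈ range m, K := by
        have := bs.qc_pos
        gcongr with i
        exact hK _ (filter_subset _ _)
    _ = bs.qc ^ m * (m * K) := by simp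

lemma N_sum_ofReal_smul_le (S : Finset ℕ) (v : ℕ → X) {K : ℝ}
    (hK : ∀ T ⊆ S, bs.N (∑ j ∈ T, v j) ≤ K) {m : ℕ} (hm : 2 * bs.qc ≤ m) {t : ℕ → ℝ}
    (ht : ∀ j ∈ S, t j ∈ Set.Icc 0 1) :
    bs.N (∑ j ∈ S, (t j : 𝕜) • v j) ≤ bs.qc ^ m * (m * K) := by
  have hq := bs.qc_pos
  have hm0 : (0 : ℝ) < m := by linarith
  have hK0 : 0 ≤ K := by simpa [bs.N_zero] using hK ∅ (empty_subset S)
  let φ : {t : ℕ → ℝ // ∀ j ∈ S, t j ∈ Set.Icc 0 1} → ℝ :=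
    fun t => bs.N (∑ j ∈ S, (t.1 j : 𝕜) • v j)
  have hbdd : BddAbove (Set.range φ) := by
    refine ⟨bs.qc ^ S.card * ∑ j ∈ S, bs.N (v j), ?_⟩
    rintro _ ⟨⟨t, ht⟩, rfl⟩
    refine (bs.N_sum_le S _).trans ?_
    gcongr with j hj
    rw [bs.N_ofReal_smul (ht j hj).1]
    exact mul_le_of_le_one_left (bs.N_nonneg _) (ht j hj).2
  have hstep : ∀ t, ∃ t', φ t ≤ bs.qc / m * (bs.qc ^ m * (m * K) + φ t') := by
    rintro ⟨t, ht⟩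
    have hmt : ∀ j ∈ S, 0 ≤ m * t j := fun j hj => mul_nonneg hm0.le (ht j hj).1
    have hd : ∀ j ∈ S, ⌊m * t j⌋₊ ≤ m := fun j hj =>
      Nat.floor_le_of_le (mul_le_of_le_one_right hm0.le (ht j hj).2)
    set u : ℕ → ℝ := fun j => m * t j - ⌊m * t j⌋₊
    have hu : ∀ j ∈ S, u j ∈ Set.Icc 0 1 := fun j hj =>
      ⟨sub_nonneg.mpr (Nat.floor_le (hmt j hj)), by linarith [Nat.lt_floor_add_one (m * t j)]⟩
    have hsplit : ∑ j ∈ S, (t j : 𝕜) • v j =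
        (((m : ℝ)⁻¹ : ℝ) : 𝕜) • (∑ j ∈ S, (⌊m * t j⌋₊ : 𝕜) • v j + ∑ j ∈ S, (u j : 𝕜) • v j) := by
      rw [← sum_add_distrib, smul_sum]
      refine sum_congr rfl fun j _ => ?_
      rw [← add_smul, smul_smul, show ((⌊m * t j⌋₊ : ℕ) : 𝕜) = ((⌊m * t j⌋₊ : ℝ) : 𝕜) by norm_cast,
        ← RCLike.ofReal_add, ← RCLike.ofReal_mul, add_sub_cancel, inv_mul_cancel_left₀ hm0.ne']
    refine ⟨⟨u, hu⟩, ?_⟩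
    calc φ ⟨t, ht⟩
        = (m : ℝ)⁻¹ * bs.N (∑ j ∈ S, (⌊m * t j⌋₊ : 𝕜) • v j + ∑ j ∈ S, (u j : 𝕜) • v j) := by
          rw [← bs.N_ofReal_smul (by positivity), ← hsplit]
      _ ≤ (m : ℝ)⁻¹ * (bs.qc * (bs.qc ^ m * (m * K) + φ ⟨u, hu⟩)) := by
          gcongr
          refine (bs.N_add_le _ _).trans ?_
          gcongr
          exact bs.N_sum_natCast_smul_le S v hK hd
      _ = bs.qc / m * (bs.qc ^ m * (m * K) + φ ⟨u, hu⟩) := by ring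
  have hr : bs.qc / m ≤ 1 / 2 := by rw [div_le_iff₀ hm0]; linarith
  exact le_of_forall_exists_le_mul_add hbdd (by positivity) hr (by positivity) hstep ⟨t, ht⟩

variable {bs}

lemma N_proj_sdiff_le {C : ℝ} (hC : 0 ≤ C) (hRG : bs.IsRGPCCWith C) {f : X} {A B : Finset ℕ}
    (hA : bs.IsGreedySet f A) (hBA : B.card ≤ A.card) (a : ℕ → 𝕜) {m : ℕ}
    (hm : 2 * bs.qc ≤ m) :
    bs.N (bs.proj (B \ A) f) ≤
      bs.qc ^ m * (m * (C * (bs.qc * (1 + bs.qc ^ 2 * C)) * bs.N (f - ∑ j ∈ B, a j • bs.e j))) := by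
  set α := bs.minCoef f A
  set ε : ℕ → 𝕜 := fun j => RCLike.phase (bs.coord j f)
  have hα := bs.minCoef_nonneg f A
  have hq := bs.qc_pos
  have hcoef : ∀ j ∈ B \ A, ‖bs.coord j f‖ ≤ α := by
    intro j hj
    obtain ⟨hjB, hjA⟩ := mem_sdiff.mp hj
    have hAne : A.Nonempty := card_pos.mp ((card_pos.mpr ⟨j, hjB⟩).trans_le hBA)
    exact bs.le_minCoef f hAne fun n hn => hA n hn j hjA
  have hproj : bs.proj (B \ A) f =
      ∑ j ∈ B \ A, ((‖bs.coord j f‖ / α : ℝ) : 𝕜) • (((α : 𝕜) * ε j) • bs.e j) := by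
    refine sum_congr rfl fun j hj => ?_
    rw [smul_smul, ← mul_assoc, ← RCLike.ofReal_mul]
    rcases hα.eq_or_lt with h0 | hpos
    · have : bs.coord j f = 0 := norm_le_zero_iff.mp (h0 ▸ hcoef j hj)
      simp [this]
    · rw [div_mul_cancel₀ _ hpos.ne', RCLike.norm_mul_phase]
  rw [hproj]
  refine bs.N_sum_ofReal_smul_le _ _ (fun T hT => ?_) hm fun j hj =>
      ⟨div_nonneg (norm_nonneg _) hα, div_le_one_of_le₀ (hcoef j hj) hα⟩
  have hsum : ∑ j ∈ T, ((α : 𝕜) * ε j) • bs.e j = (α : 𝕜) • bs.indSign ε T := by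
    simp only [indSign, smul_sum, smul_smul]
  rw [hsum, bs.N_ofReal_smul hα]
  exact minCoef_mul_N_indSign_le_of_subset_sdiff hC hRG f a hBA hT fun j _ => RCLike.norm_phase _

lemma isGreedyWith_of_isRGPCCWith {C : ℝ} (hC : 0 ≤ C) (hRG : bs.IsRGPCCWith C) {m : ℕ}
    (hm : 2 * bs.qc ≤ m) :
    bs.IsGreedyWith
      (bs.qc * (bs.qc ^ 2 * C + bs.qc ^ m * (m * (C * (bs.qc * (1 + bs.qc ^ 2 * C)))))) := by
  intro f A B a hA hBA
  set g := f - ∑ j ∈ B, a j • bs.e j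
  rw [bs.sub_proj_eq f A B a]
  calc bs.N (g - bs.proj (A ∪ B) g + bs.proj (B \ A) f)
      ≤ bs.qc * (bs.N (g - bs.proj (A ∪ B) g) + bs.N (bs.proj (B \ A) f)) := bs.N_add_le _ _
    _ ≤ bs.qc * (bs.qc ^ 2 * C * bs.N g +
          bs.qc ^ m * (m * (C * (bs.qc * (1 + bs.qc ^ 2 * C)) * bs.N g))) := by
        have := bs.qc_pos
        gcongr
        · exact N_sub_proj_le hC hRG g (A ∪ B)
        · exact N_proj_sdiff_le hC hRG hA hBA a hm
    _ = _ := by ring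

end QBasis

/-- A basis of a quasi-Banach space over `ℝ` or `ℂ` is greedy if and only if
it is relaxed greedy for polynomials with constant coefficients (RGPCC). -/
theorem greedy_iff_RGPCC {𝕜 : Type*} [RCLike 𝕜] {X : Type*} [AddCommGroup X] [Module 𝕜 X]
    (bs : QBasis 𝕜 X) :
    (∃ C : ℝ, 0 < C ∧ bs.IsGreedyWith C) ↔ (∃ C : ℝ, 0 < C ∧ bs.IsRGPCCWith C) := by
  constructor
  · rintro ⟨C, hC, hG⟩
    exact ⟨C, hC, QBasis.isRGPCCWith_of_isGreedyWith hG⟩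
  · rintro ⟨C, hC, hRG⟩
    have := bs.qc_pos
    exact ⟨_, by positivity, QBasis.isGreedyWith_of_isRGPCCWith hC.le hRG (Nat.le_ceil _)⟩
end
end

section
/- Let 0 < p ≤ 1, let X be a p-Banach space over 𝔽 = ℝ or ℂ, and let 𝒳 be a basis of X that is C_pg-RGPCC. Then 𝒳 is greedy with greedy constant C_g ≤ A_p²·C_pg², where A_p = (2^p − 1)^{−1/p}. -/
open scoped BigOperators

noncomputable section

/-- A basis of a `p`-Banach space over `𝕜` (`𝕜 = ℝ` or `ℂ`), bundled with the `p`-norm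
`N`, the basis vectors `e`, and the biorthogonal functionals `coord`. -/
structure PBasis (𝕜 : Type*) [RCLike 𝕜] (X : Type*) [AddCommGroup X] [Module 𝕜 X]
    (p : ℝ) : Type _ where
  /-- the `p`-norm of the space -/
  N : X → ℝ
  N_nonneg : ∀ f : X, 0 ≤ N f
  N_eq_zero_iff : ∀ f : X, N f = 0 ↔ f = 0
  N_smul : ∀ (t : 𝕜) (f : X), N (t • f) = ‖t‖ * N f
  N_padd : ∀ f g : X, N (f + g) ^ p ≤ N f ^ p + N g ^ p
  /-- completeness with respect to the `p`-norm -/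
  complete : ∀ u : ℕ → X,
      (∀ ε : ℝ, 0 < ε → ∃ n₀ : ℕ, ∀ m n : ℕ, n₀ ≤ m → n₀ ≤ n → N (u m - u n) < ε) →
      ∃ f : X, ∀ ε : ℝ, 0 < ε → ∃ n₀ : ℕ, ∀ n : ℕ, n₀ ≤ n → N (u n - f) < ε
  /-- the basis vectors -/
  e : ℕ → X
  /-- the biorthogonal functionals -/
  coord : ℕ → X →ₗ[𝕜] 𝕜
  biorth : ∀ n m : ℕ, coord n (e m) = if n = m then (1 : 𝕜) else 0
  /-- the closed linear span of the basis vectors is the whole space -/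
  dense_span : ∀ f : X, ∀ ε : ℝ, 0 < ε →
      ∃ g ∈ Submodule.span 𝕜 (Set.range e), N (f - g) < ε
  e_bdd : ∃ c : ℝ, ∀ n : ℕ, N (e n) ≤ c
  coord_bdd : ∃ c : ℝ, ∀ (n : ℕ) (f : X), ‖coord n f‖ ≤ c * N f

namespace PBasis

variable {𝕜 : Type*} [RCLike 𝕜] {X : Type*} [AddCommGroup X] [Module 𝕜 X] {p : ℝ}

/-- The projection `P_A f = ∑_{n ∈ A} x_n^*(f) x_n`. -/
def proj (bs : PBasis 𝕜 X p) (A : Finset ℕ) (f : X) : X :=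
  ∑ n ∈ A, bs.coord n f • bs.e n

/-- The support of `f`. -/
def supp (bs : PBasis 𝕜 X p) (f : X) : Set ℕ := {n | bs.coord n f ≠ 0}

/-- `A` is a greedy set of `f`: `min_{n ∈ A} |x_n^*(f)| ≥ max_{m ∉ A} |x_m^*(f)|`. -/
def IsGreedySet (bs : PBasis 𝕜 X p) (f : X) (A : Finset ℕ) : Prop :=
  ∀ n ∈ A, ∀ m : ℕ, m ∉ A → ‖bs.coord m f‖ ≤ ‖bs.coord n f‖

/-- `𝟙_{ε,A} = ∑_{j ∈ A} ε_j x_j`. -/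
def indSign (bs : PBasis 𝕜 X p) (ε : ℕ → 𝕜) (A : Finset ℕ) : X :=
  ∑ j ∈ A, ε j • bs.e j

/-- `𝟙_A = ∑_{j ∈ A} x_j`. -/
def ind (bs : PBasis 𝕜 X p) (A : Finset ℕ) : X := ∑ j ∈ A, bs.e j

/-- `ε` is a sign on `A`. -/
def IsSign (ε : ℕ → 𝕜) (A : Finset ℕ) : Prop := ∀ j ∈ A, ‖ε j‖ = 1

/-- `min_{n ∈ A} |x_n^*(f)|`. -/
def minCoef (bs : PBasis 𝕜 X p) (f : X) (A : Finset ℕ) : ℝ :=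
  sInf ((fun n => ‖bs.coord n f‖) '' (A : Set ℕ))

/-- `‖f − P_A(f)‖ ≤ C·σ_m(f)` for every greedy set `A` of cardinality `m`. -/
def IsGreedyWith (bs : PBasis 𝕜 X p) (C : ℝ) : Prop :=
  ∀ (f : X) (A B : Finset ℕ) (a : ℕ → 𝕜), bs.IsGreedySet f A → B.card ≤ A.card →
    bs.N (f - bs.proj A f) ≤ C * bs.N (f - ∑ j ∈ B, a j • bs.e j)

/-- `‖f − P_A(f)‖ ≤ C·ρ_m(f)` for every greedy set `A` of cardinality `m`, where
`ρ_m(f) = inf {‖f − α 𝟙_{ε,B}‖ : |B| = m, ε sign}` and `α = min_{n ∈ A} |x_n^*(f)|`. -/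
def IsRGPCCWith (bs : PBasis 𝕜 X p) (C : ℝ) : Prop :=
  ∀ (f : X) (A B : Finset ℕ) (ε : ℕ → 𝕜), bs.IsGreedySet f A → B.card = A.card →
    IsSign ε B →
    bs.N (f - bs.proj A f) ≤ C * bs.N (f - ((bs.minCoef f A : ℝ) : 𝕜) • bs.indSign ε B)

/-- `‖f − P_A(f)‖ ≤ C·ϱ_m(f)` for every greedy set `A` of cardinality `m`, where
`ϱ_m(f) = inf {‖f − α 𝟙_B‖ : |B| = m}` and `α = min_{n ∈ A} |x_n^*(f)|`. -/
def IsURGPCCWith (bs : PBasis 𝕜 X p) (C : ℝ) : Prop :=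
  ∀ (f : X) (A B : Finset ℕ), bs.IsGreedySet f A → B.card = A.card →
    bs.N (f - bs.proj A f) ≤ C * bs.N (f - ((bs.minCoef f A : ℝ) : 𝕜) • bs.ind B)

/-- `K`-unconditionality. -/
def IsUncondWith (bs : PBasis 𝕜 X p) (K : ℝ) : Prop :=
  ∀ (A : Finset ℕ) (f : X), bs.N (bs.proj A f) ≤ K * bs.N f

/-- `C`-quasi-greediness. -/
def IsQuasiGreedyWith (bs : PBasis 𝕜 X p) (C : ℝ) : Prop :=
  ∀ (f : X) (A : Finset ℕ), bs.IsGreedySet f A → bs.N (f - bs.proj A f) ≤ C * bs.N f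

/-- `C`-almost-greediness. -/
def IsAlmostGreedyWith (bs : PBasis 𝕜 X p) (C : ℝ) : Prop :=
  ∀ (f : X) (A B : Finset ℕ), bs.IsGreedySet f A → B.card ≤ A.card →
    bs.N (f - bs.proj A f) ≤ C * bs.N (f - bs.proj B f)

/-- `D`-democracy. -/
def IsDemocraticWith (bs : PBasis 𝕜 X p) (D : ℝ) : Prop :=
  ∀ A B : Finset ℕ, A.card ≤ B.card → bs.N (bs.ind A) ≤ D * bs.N (bs.ind B)

/-- `D`-superdemocracy. -/
def IsSuperdemocraticWith (bs : PBasis 𝕜 X p) (D : ℝ) : Prop :=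
  ∀ (A B : Finset ℕ) (ε η : ℕ → 𝕜), A.card ≤ B.card → IsSign ε A → IsSign η B →
    bs.N (bs.indSign ε A) ≤ D * bs.N (bs.indSign η B)

/-- `A < B`, i.e. every element of `A` is smaller than every element of `B`. -/
def FinsetBefore (A B : Finset ℕ) : Prop := ∀ a ∈ A, ∀ b ∈ B, a < b

open scoped Classical in
/-- `sgn z = z/|z|` (with the convention `sgn 0 = 1`). -/
def sgn (z : 𝕜) : 𝕜 := if z = 0 then 1 else z / ((‖z‖ : ℝ) : 𝕜)

end PBasis

/-!
Fix a greedy set `A` of `f` with minimum coefficient `α` and a competitor `y` supported on `B`,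
`|B| = |A|`. After removing a far-out block of tiny coefficients we may assume that `f` vanishes on
a set `G` of `|B \ A| + 1` indices outside `A ∪ B`. Two applications of RGPCC, each to a
modification of `f` by a flat block of height `α` chosen so that the greedy set has minimum exactly
`α`, show that `T = f - P_{A ∪ B} f` satisfies `‖T + α 𝟙_{ω,D}‖ ≤ C² ‖f - y‖` for every
`D ⊆ B \ A` and every sign `ω`. Every `v` with `|v_j| ≤ α` on `B \ A` is the midpoint of such a
flat vector and another vector of the same box, so iterating the `p`-triangle inequality gives
`‖T + ∑ v_j x_j‖^p ≤ (2^p - 1)⁻¹ (C² ‖f - y‖)^p`; the choice `v_j = x_j^*(f)` turns the left side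
into `‖f - P_A f‖^p`. Hence `C_g ≤ A_p C² ≤ A_p² C²`.
-/

open Filter Topology Finset

namespace PBasis

variable {𝕜 : Type*} [RCLike 𝕜] {X : Type*} [AddCommGroup X] [Module 𝕜 X] {p : ℝ}

section Basic

variable (bs : PBasis 𝕜 X p)

lemma N_zero : bs.N 0 = 0 := (bs.N_eq_zero_iff 0).2 rfl

lemma N_neg (x : X) : bs.N (-x) = bs.N x := by
  simpa using bs.N_smul (-1) x

lemma N_sub_rpow_le (x y : X) : bs.N (x - y) ^ p ≤ bs.N x ^ p + bs.N y ^ p := by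
  simpa only [sub_eq_add_neg, N_neg] using bs.N_padd x (-y)

lemma N_smul_rpow (t : 𝕜) (x : X) : bs.N (t • x) ^ p = ‖t‖ ^ p * bs.N x ^ p := by
  rw [bs.N_smul, Real.mul_rpow (norm_nonneg t) (bs.N_nonneg x)]

lemma N_sum_rpow_le (hp : 0 < p) {ι : Type*} (s : Finset ι) (u : ι → X) :
    bs.N (∑ i ∈ s, u i) ^ p ≤ ∑ i ∈ s, bs.N (u i) ^ p := by
  induction s using Finset.cons_induction with
  | empty => simp [N_zero, Real.zero_rpow hp.ne']
  | cons a s ha ih =>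
    rw [sum_cons, sum_cons]
    exact (bs.N_padd _ _).trans (by gcongr)

lemma e_ne_zero (n : ℕ) : bs.e n ≠ 0 := fun h => by
  simpa [h] using bs.biorth n n

lemma coord_indSign (w : ℕ → 𝕜) (E : Finset ℕ) (n : ℕ) :
    bs.coord n (bs.indSign w E) = if n ∈ E then w n else 0 := by
  simp [indSign, bs.biorth]

lemma proj_eq_indSign (S : Finset ℕ) (f : X) :
    bs.proj S f = bs.indSign (fun n => bs.coord n f) S := rfl

lemma coord_proj (S : Finset ℕ) (f : X) (n : ℕ) :
    bs.coord n (bs.proj S f) = if n ∈ S then bs.coord n f else 0 :=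
  bs.coord_indSign _ S n

lemma proj_add (S : Finset ℕ) (x y : X) : bs.proj S (x + y) = bs.proj S x + bs.proj S y := by
  simp [proj, add_smul, sum_add_distrib]

lemma proj_sub (S : Finset ℕ) (x y : X) : bs.proj S (x - y) = bs.proj S x - bs.proj S y := by
  simp [proj, sub_smul, sum_sub_distrib]

lemma proj_smul (S : Finset ℕ) (c : 𝕜) (x : X) : bs.proj S (c • x) = c • bs.proj S x := by
  simp [proj, smul_sum, mul_smul]

lemma proj_union {S S' : Finset ℕ} (h : Disjoint S S') (x : X) :
    bs.proj (S ∪ S') x = bs.proj S x + bs.proj S' x :=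
  sum_union h

lemma proj_insert {S : Finset ℕ} {z : ℕ} (hz : z ∉ S) (x : X) :
    bs.proj (insert z S) x = bs.coord z x • bs.e z + bs.proj S x :=
  sum_insert hz

lemma proj_eq_zero {S : Finset ℕ} {x : X} (h : ∀ n ∈ S, bs.coord n x = 0) : bs.proj S x = 0 :=
  sum_eq_zero fun n hn => by rw [h n hn, zero_smul]

lemma proj_indSign (S : Finset ℕ) (w : ℕ → 𝕜) (E : Finset ℕ) :
    bs.proj S (bs.indSign w E) = bs.indSign w (E ∩ S) := by
  simp only [proj, coord_indSign, ite_smul, zero_smul, sum_ite_mem, inter_comm S E]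
  rfl

lemma indSign_union (w : ℕ → 𝕜) {E F : Finset ℕ} (h : Disjoint E F) :
    bs.indSign w (E ∪ F) = bs.indSign w E + bs.indSign w F :=
  sum_union h

lemma indSign_congr {w w' : ℕ → 𝕜} {E : Finset ℕ} (h : ∀ j ∈ E, w j = w' j) :
    bs.indSign w E = bs.indSign w' E :=
  sum_congr rfl fun j hj => by rw [h j hj]

lemma indSign_ite_mem (w : ℕ → 𝕜) {D E : Finset ℕ} (hDE : D ⊆ E) :
    bs.indSign (fun j => if j ∈ D then w j else 0) E = bs.indSign w D := by
  simp only [indSign, ite_smul, zero_smul, sum_ite_mem, inter_eq_right.2 hDE]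

lemma rpow_N_indSign_le (hp : 0 < p) {w : ℕ → 𝕜} {E : Finset ℕ} {α : ℝ}
    (hw : ∀ j ∈ E, ‖w j‖ ≤ α) :
    bs.N (bs.indSign w E) ^ p ≤ α ^ p * ∑ j ∈ E, bs.N (bs.e j) ^ p := by
  rw [mul_sum]
  refine (bs.N_sum_rpow_le hp E _).trans (sum_le_sum fun j hj => ?_)
  rw [N_smul_rpow]
  gcongr
  exacts [Real.rpow_nonneg (bs.N_nonneg _) p, hw j hj]

end Basic

lemma norm_sgn (z : 𝕜) : ‖sgn z‖ = 1 := by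
  by_cases hz : z = 0
  · simp [sgn, hz]
  · simp [sgn, hz, norm_div]

lemma norm_add_mul_sgn (z : 𝕜) {c : ℝ} (hc : 0 ≤ c) : ‖z + (c : 𝕜) * sgn z‖ = ‖z‖ + c := by
  by_cases hz : z = 0
  · simp [hz, sgn, abs_of_nonneg hc]
  · have hz' : ((‖z‖ : ℝ) : 𝕜) ≠ 0 := by simpa using hz
    have : z + (c : 𝕜) * sgn z = ((‖z‖ + c : ℝ) : 𝕜) * sgn z := by
      simp only [sgn, if_neg hz]
      push_cast
      field_simp
    rw [this, norm_mul, norm_sgn, mul_one, RCLike.norm_ofReal, abs_of_nonneg (by positivity)]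

lemma norm_two_mul_sub_mul_sgn (z : 𝕜) (c : ℝ) :
    ‖2 * z - (c : 𝕜) * sgn z‖ = |2 * ‖z‖ - c| := by
  by_cases hz : z = 0
  · simp [hz, sgn]
  · have hz' : ((‖z‖ : ℝ) : 𝕜) ≠ 0 := by simpa using hz
    have : 2 * z - (c : 𝕜) * sgn z = ((2 * ‖z‖ - c : ℝ) : 𝕜) * sgn z := by
      simp only [sgn, if_neg hz]
      push_cast
      field_simp
    rw [this, norm_mul, norm_sgn, mul_one, RCLike.norm_ofReal]

section MinCoef

variable (bs : PBasis 𝕜 X p) {f : X} {A : Finset ℕ}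

lemma minCoef_nonneg (f : X) (A : Finset ℕ) : 0 ≤ bs.minCoef f A :=
  Real.sInf_nonneg (by rintro _ ⟨n, -, rfl⟩; exact norm_nonneg _)

lemma minCoef_le {n : ℕ} (hn : n ∈ A) : bs.minCoef f A ≤ ‖bs.coord n f‖ :=
  csInf_le ⟨0, by rintro _ ⟨m, -, rfl⟩; exact norm_nonneg _⟩ ⟨n, hn, rfl⟩

lemma minCoef_eq {α : ℝ} (h : ∀ n ∈ A, α ≤ ‖bs.coord n f‖) {z : ℕ} (hz : z ∈ A)
    (hzα : ‖bs.coord z f‖ = α) : bs.minCoef f A = α :=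
  IsLeast.csInf_eq ⟨⟨z, hz, hzα⟩, by rintro _ ⟨n, hn, rfl⟩; exact h n hn⟩

variable {bs}

lemma IsGreedySet.norm_coord_le_minCoef (hA : bs.IsGreedySet f A) (hAne : A.Nonempty)
    {m : ℕ} (hm : m ∉ A) : ‖bs.coord m f‖ ≤ bs.minCoef f A := by
  obtain ⟨n, hn⟩ := hAne
  exact le_csInf ⟨_, n, hn, rfl⟩ (by rintro _ ⟨k, hk, rfl⟩; exact hA k hk m hm)

lemma IsGreedySet.sub_proj (hA : bs.IsGreedySet f A) {G : Finset ℕ} (hAG : Disjoint A G) :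
    bs.IsGreedySet (f - bs.proj G f) A := fun n hn m hm => by
  simp only [map_sub, coord_proj, if_neg (disjoint_left.1 hAG hn), sub_zero]
  split_ifs
  · simp
  · simpa using hA n hn m hm

end MinCoef

section Decay

variable (bs : PBasis 𝕜 X p)

lemma tendsto_coord (f : X) : Tendsto (fun j => bs.coord j f) atTop (𝓝 0) := by
  obtain ⟨c, hc⟩ := bs.coord_bdd
  have hc' : ∀ n x, ‖bs.coord n x‖ ≤ (|c| + 1) * bs.N x := fun n x =>
    (hc n x).trans (by gcongr; exacts [bs.N_nonneg x, (le_abs_self c).trans (by linarith)])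
  rw [Metric.tendsto_atTop]
  intro ε hε
  obtain ⟨g, hg, hfg⟩ := bs.dense_span f (ε / (|c| + 1)) (by positivity)
  obtain ⟨w, rfl⟩ := Finsupp.mem_span_range_iff_exists_finsupp.1 hg
  refine ⟨w.support.sup id + 1, fun n hn => ?_⟩
  have hnw : n ∉ w.support := fun h => by have := le_sup (f := id) h; simp at this; omega
  have hcoord : bs.coord n (w.sum fun i a => a • bs.e i) = 0 := by
    simpa [indSign, Finsupp.sum, hnw] using bs.coord_indSign w w.support n
  rw [dist_zero_right, ← sub_zero (bs.coord n f), ← hcoord, ← map_sub]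
  calc _ ≤ (|c| + 1) * bs.N (f - w.sum fun i a => a • bs.e i) := hc' n _
    _ < (|c| + 1) * (ε / (|c| + 1)) := by gcongr
    _ = ε := by field_simp

lemma tendsto_rpow_N_coord_smul (hp : 0 < p) (f : X) :
    Tendsto (fun j => bs.N (bs.coord j f • bs.e j) ^ p) atTop (𝓝 0) := by
  obtain ⟨ce, hce⟩ := bs.e_bdd
  have hlim : Tendsto (fun j => ‖bs.coord j f‖ ^ p * ce ^ p) atTop (𝓝 0) := by
    have := ((continuous_norm.tendsto (0 : 𝕜)).comp (bs.tendsto_coord f)).rpow_const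
      (p := p) (Or.inr hp.le)
    simpa [Function.comp_def, Real.zero_rpow hp.ne'] using this.mul_const (ce ^ p)
  refine squeeze_zero (fun j => Real.rpow_nonneg (bs.N_nonneg _) p) (fun j => ?_) hlim
  rw [N_smul_rpow]
  gcongr
  exacts [bs.N_nonneg _, hce j]

lemma exists_disjoint_rpow_N_proj_le (hp : 0 < p) (f : X) (S : Finset ℕ) (k : ℕ) {η : ℝ}
    (hη : 0 < η) : ∃ G : Finset ℕ, Disjoint G S ∧ G.card = k ∧ bs.N (bs.proj G f) ^ p ≤ η := by
  have hwin : Tendsto (fun n => ∑ i ∈ range k, bs.N (bs.coord (n + i) f • bs.e (n + i)) ^ p)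
      atTop (𝓝 0) := by
    simpa using tendsto_finsetSum (range k) fun i _ =>
      (bs.tendsto_rpow_N_coord_smul hp f).comp (tendsto_add_atTop_nat i)
  obtain ⟨n, hnS, hn⟩ := ((eventually_gt_atTop (S.sup id)).and
    (hwin.eventually (eventually_le_nhds hη))).exists
  refine ⟨Ico n (n + k), disjoint_left.2 fun j hj hjS => ?_, by simp, ?_⟩
  · have := le_sup (f := id) hjS
    simp only [id, mem_Ico] at this hj
    omega
  · refine (bs.N_sum_rpow_le hp _ _).trans ?_
    rwa [sum_Ico_eq_sum_range, Nat.add_sub_cancel_left]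

end Decay

section Dyadic

variable (bs : PBasis 𝕜 X p)

lemma exists_two_smul_indSign_eq {α : ℝ} {v : ℕ → 𝕜} {E : Finset ℕ}
    (hv : ∀ j ∈ E, ‖v j‖ ≤ α) :
    ∃ D ⊆ E, ∃ ω : ℕ → 𝕜, IsSign ω D ∧ ∃ v' : ℕ → 𝕜, (∀ j ∈ E, ‖v' j‖ ≤ α) ∧
      (2 : 𝕜) • bs.indSign v E = (α : 𝕜) • bs.indSign ω D + bs.indSign v' E := by
  refine ⟨E.filter fun j => α < 2 * ‖v j‖, filter_subset _ _, fun j => sgn (v j),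
    fun j _ => norm_sgn _,
    fun j => 2 * v j - if α < 2 * ‖v j‖ then (α : 𝕜) * sgn (v j) else 0, fun j hj => ?_, ?_⟩
  · have := hv j hj
    dsimp only
    split_ifs with hj'
    · rw [norm_two_mul_sub_mul_sgn, abs_le]
      constructor <;> linarith
    · simpa using not_lt.1 hj'
  · simp only [indSign, sum_filter, smul_sum, ← sum_add_distrib]
    refine sum_congr rfl fun j _ => ?_
    split_ifs <;> module

theorem rpow_N_add_indSign_le (hp : 0 < p) (hp1 : p ≤ 1) (T : X) (E : Finset ℕ) {α M : ℝ}
    (hflat : ∀ D ⊆ E, ∀ ω : ℕ → 𝕜, IsSign ω D → bs.N (T + (α : 𝕜) • bs.indSign ω D) ≤ M)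
    {v : ℕ → 𝕜} (hv : ∀ j ∈ E, ‖v j‖ ≤ α) :
    bs.N (T + bs.indSign v E) ^ p ≤ (2 ^ p - 1)⁻¹ * M ^ p := by
  set c := α ^ p * ∑ j ∈ E, bs.N (bs.e j) ^ p
  have hT : bs.N T ≤ M := by
    simpa [indSign] using hflat ∅ (empty_subset E) 1 (by simp [IsSign])
  have hMp : 0 ≤ M ^ p := Real.rpow_nonneg ((bs.N_nonneg T).trans hT) p
  have h2p : 1 < (2 : ℝ) ^ p := Real.one_lt_rpow one_lt_two hp
  have h2p1 : (2 : ℝ) ^ p ≤ 2 := by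
    simpa using Real.rpow_le_rpow_of_exponent_le one_le_two hp1
  have hq : 0 ≤ ((2 : ℝ) ^ p)⁻¹ := by positivity
  -- `v` is the midpoint of a flat signed block and a vector of the same box, so each halving
  -- scales the error term `c` by `2^{-p}`
  have hK : ∀ K : ℕ, ∀ v : ℕ → 𝕜, (∀ j ∈ E, ‖v j‖ ≤ α) →
      bs.N (T + bs.indSign v E) ^ p ≤ (2 ^ p - 1)⁻¹ * M ^ p + ((2 ^ p)⁻¹) ^ K * c := by
    intro K
    induction K with
    | zero =>
      intro v hv
      have hM : M ^ p ≤ (2 ^ p - 1)⁻¹ * M ^ p :=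
        le_mul_of_one_le_left hMp ((one_le_inv₀ (by linarith)).2 (by linarith))
      have := Real.rpow_le_rpow (bs.N_nonneg T) hT hp.le
      linarith [bs.N_padd T (bs.indSign v E), bs.rpow_N_indSign_le hp hv]
    | succ K ih =>
      intro v hv
      obtain ⟨D, hDE, ω, hω, v', hv', hsplit⟩ := bs.exists_two_smul_indSign_eq hv
      have hmid : T + bs.indSign v E =
          (2 : 𝕜)⁻¹ • ((T + (α : 𝕜) • bs.indSign ω D) + (T + bs.indSign v' E)) := by
        rw [add_add_add_comm, ← hsplit, ← two_smul 𝕜 T, ← smul_add, smul_smul,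
          inv_mul_cancel₀ two_ne_zero, one_smul]
      have hflatp := Real.rpow_le_rpow (bs.N_nonneg _) (hflat D hDE ω hω) hp.le
      calc bs.N (T + bs.indSign v E) ^ p
          = ((2 : ℝ) ^ p)⁻¹ *
              bs.N ((T + (α : 𝕜) • bs.indSign ω D) + (T + bs.indSign v' E)) ^ p := by
            rw [hmid, N_smul_rpow, norm_inv, RCLike.norm_ofNat, Real.inv_rpow zero_le_two]
        _ ≤ ((2 : ℝ) ^ p)⁻¹ * (M ^ p + ((2 ^ p - 1)⁻¹ * M ^ p + ((2 ^ p)⁻¹) ^ K * c)) := by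
            gcongr
            exact (bs.N_padd _ _).trans (add_le_add hflatp (ih v' hv'))
        _ = (2 ^ p - 1)⁻¹ * M ^ p + ((2 ^ p)⁻¹) ^ (K + 1) * c := by
            rw [inv_pow, inv_pow, pow_succ]
            field_simp [(by linarith : (2 : ℝ) ^ p - 1 ≠ 0)]
            ring
  have hlim : Tendsto (fun K : ℕ => (2 ^ p - 1)⁻¹ * M ^ p + ((2 ^ p)⁻¹) ^ K * c) atTop
      (𝓝 ((2 ^ p - 1)⁻¹ * M ^ p)) := by
    simpa using ((tendsto_pow_atTop_nhds_zero_of_lt_one hq (inv_lt_one_of_one_lt₀ h2p)).mul_const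
      c).const_add ((2 ^ p - 1)⁻¹ * M ^ p)
  exact ge_of_tendsto' hlim fun K => hK K v hv

end Dyadic

section RGPCC

variable {bs : PBasis 𝕜 X p} {C : ℝ}

lemma IsRGPCCWith.one_le (h : bs.IsRGPCCWith C) : 1 ≤ C := by
  have h0 := h (bs.e 0) ∅ ∅ 1 (by simp [IsGreedySet]) rfl (by simp [IsSign])
  simp only [proj, indSign, sum_empty, smul_zero, sub_zero] at h0
  have hpos : 0 < bs.N (bs.e 0) :=
    (bs.N_nonneg _).lt_of_ne fun h' => bs.e_ne_zero 0 ((bs.N_eq_zero_iff _).1 h'.symm)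
  nlinarith

/-- Adding `α` times a sign that agrees with `sgn (x_j^*(u))` on `Γ \ R` pushes those coefficients
above `α`, while `z` keeps exactly `α`. -/
lemma isGreedySet_add_smul_indSign {u : X} {Γ R F : Finset ℕ} {z : ℕ} {α : ℝ} {μ : ℕ → 𝕜}
    (hα : 0 ≤ α) (hzΓ : z ∈ Γ) (hzR : z ∉ R) (hFΓ : Disjoint F Γ)
    (hμΓ : ∀ j ∈ Γ \ R, μ j = sgn (bs.coord j u)) (hμF : IsSign μ F)
    (huz : bs.coord z u = 0) (huF : ∀ j ∈ F, bs.coord j u = 0)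
    (huR : ∀ j ∈ R, α ≤ ‖bs.coord j u‖) (hu_out : ∀ j ∉ Γ, ‖bs.coord j u‖ ≤ α) :
    bs.IsGreedySet (u + (α : 𝕜) • bs.indSign μ (Γ \ R ∪ F)) Γ ∧
      bs.minCoef (u + (α : 𝕜) • bs.indSign μ (Γ \ R ∪ F)) Γ = α := by
  set W := u + (α : 𝕜) • bs.indSign μ (Γ \ R ∪ F)
  have hcoordW : ∀ m, bs.coord m W =
      bs.coord m u + if m ∈ Γ \ R ∪ F then (α : 𝕜) * μ m else 0 := by
    intro m
    simp [W, bs.coord_indSign, mul_ite]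
  have hmid : ∀ m ∈ Γ \ R, ‖bs.coord m W‖ = ‖bs.coord m u‖ + α := by
    intro m hm
    rw [hcoordW, if_pos (mem_union_left _ hm), hμΓ m hm]
    exact norm_add_mul_sgn (bs.coord m u) hα
  have hin : ∀ n ∈ Γ, α ≤ ‖bs.coord n W‖ := by
    intro n hn
    by_cases hnR : n ∈ R
    · have hnE : n ∉ Γ \ R ∪ F := by
        simp only [mem_union, Finset.mem_sdiff, hnR, not_true_eq_false, and_false, false_or]
        exact disjoint_right.1 hFΓ hn
      simpa [hcoordW, hnE] using huR n hnR
    · rw [hmid n (Finset.mem_sdiff.2 ⟨hn, hnR⟩)]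
      linarith [norm_nonneg (bs.coord n u)]
  have hzW : ‖bs.coord z W‖ = α := by
    rw [hmid z (Finset.mem_sdiff.2 ⟨hzΓ, hzR⟩), huz, norm_zero, zero_add]
  have hout : ∀ m ∉ Γ, ‖bs.coord m W‖ ≤ α := by
    intro m hm
    by_cases hmF : m ∈ F
    · simp [hcoordW, hmF, huF m hmF, hμF m hmF, abs_of_nonneg hα]
    · have hmE : m ∉ Γ \ R ∪ F := by simp [hm, hmF]
      simpa [hcoordW, hmE] using hu_out m hm
  exact ⟨fun n hn m hm => (hout m hm).trans (hin n hn), bs.minCoef_eq hin hzΓ hzW⟩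

theorem IsRGPCCWith.N_sub_proj_add_smul_indSign_le (h : bs.IsRGPCCWith C)
    {u : X} {Γ R F : Finset ℕ} {z : ℕ} {α : ℝ} {ω : ℕ → 𝕜} (hα : 0 ≤ α)
    (hRΓ : R ⊆ Γ) (hzΓ : z ∈ Γ) (hzR : z ∉ R) (hFΓ : Disjoint F Γ) (hcard : F.card = R.card)
    (hω : IsSign ω F) (huz : bs.coord z u = 0) (huF : ∀ j ∈ F, bs.coord j u = 0)
    (huR : ∀ j ∈ R, α ≤ ‖bs.coord j u‖) (hu_out : ∀ j ∉ Γ, ‖bs.coord j u‖ ≤ α) :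
    bs.N (u - bs.proj Γ u + (α : 𝕜) • bs.indSign ω F) ≤ C * bs.N u := by
  set μ : ℕ → 𝕜 := fun j => if j ∈ F then ω j else sgn (bs.coord j u)
  have hΓRF : Disjoint (Γ \ R) F := (hFΓ.mono_right sdiff_subset).symm
  obtain ⟨hgreedy, hmin⟩ := isGreedySet_add_smul_indSign (μ := μ) hα hzΓ hzR hFΓ
    (fun j hj => by simp [μ, disjoint_left.1 hΓRF hj]) (fun j hj => by simp [μ, hj, hω j hj])
    huz huF huR hu_out
  have hEcard : (Γ \ R ∪ F).card = Γ.card := by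
    rw [card_union_of_disjoint hΓRF, card_sdiff_of_subset hRΓ, hcard,
      Nat.sub_add_cancel (card_le_card hRΓ)]
  have hsign : IsSign μ (Γ \ R ∪ F) := fun j _ => by
    by_cases hj : j ∈ F <;> simp [μ, hj, hω j, norm_sgn]
  have key := h _ Γ _ μ hgreedy hEcard hsign
  have hEΓ : (Γ \ R ∪ F) ∩ Γ = Γ \ R := by
    rw [union_inter_distrib_right, disjoint_iff_inter_eq_empty.1 hFΓ, union_empty,
      inter_eq_left.2 sdiff_subset]
  have hE : bs.indSign μ (Γ \ R ∪ F) = bs.indSign μ (Γ \ R) + bs.indSign ω F := by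
    rw [bs.indSign_union μ hΓRF]
    exact congrArg _ (bs.indSign_congr fun j hj => by simp [μ, hj])
  rw [hmin, add_sub_cancel_right, bs.proj_add, bs.proj_smul, bs.proj_indSign, hEΓ, hE] at key
  convert key using 2
  module

theorem IsRGPCCWith.N_add_smul_indSign_le_of_vanishing (h : bs.IsRGPCCWith C)
    {T : X} {G D F : Finset ℕ} {z : ℕ} {α : ℝ} {ω : ℕ → 𝕜} (hα : 0 ≤ α)
    (hFG : F ⊆ G) (hzG : z ∈ G) (hzF : z ∉ F) (hDG : Disjoint D G) (hcard : D.card = F.card)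
    (hω : IsSign ω D) (hTG : ∀ j ∈ G, bs.coord j T = 0) (hTD : ∀ j ∈ D, bs.coord j T = 0)
    (hT : ∀ j, ‖bs.coord j T‖ ≤ α) :
    bs.N (T + (α : 𝕜) • bs.indSign ω D) ≤ C * bs.N (T + (α : 𝕜) • bs.indSign 1 F) := by
  have hcu : ∀ m, bs.coord m (T + (α : 𝕜) • bs.indSign 1 F) =
      bs.coord m T + if m ∈ F then (α : 𝕜) else 0 := by
    simp [coord_indSign]
  have hrem : T + (α : 𝕜) • bs.indSign 1 F - bs.proj G (T + (α : 𝕜) • bs.indSign 1 F) = T := by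
    rw [bs.proj_add, bs.proj_smul, bs.proj_indSign, inter_eq_left.2 hFG, bs.proj_eq_zero hTG]
    abel
  have hDF : ∀ j ∈ D, j ∉ F := fun j hj hjF => disjoint_left.1 hDG hj (hFG hjF)
  have key := h.N_sub_proj_add_smul_indSign_le (u := T + (α : 𝕜) • bs.indSign 1 F) hα hFG hzG
    hzF hDG hcard hω
    (by simp [hcu, hTG z hzG, hzF])
    (fun j hj => by simp [hcu, hTD j hj, hDF j hj])
    (fun j hj => by simp [hcu, hTG j (hFG hj), hj, abs_of_nonneg hα])
    (fun j hj => by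
      have hjF : j ∉ F := fun hjF => hj (hFG hjF)
      simpa [hcu, hjF] using hT j)
  rwa [hrem] at key

theorem IsRGPCCWith.N_sub_proj_union_add_smul_indSign_one_le (h : bs.IsRGPCCWith C)
    {f : X} {A B G F : Finset ℕ} (a : ℕ → 𝕜) {z : ℕ} (hA : bs.IsGreedySet f A)
    (hAne : A.Nonempty) (hG : Disjoint G (A ∪ B)) (hfG : ∀ j ∈ G, bs.coord j f = 0)
    (hzG : z ∈ G) (hFG : F ⊆ G) (hzF : z ∉ F) (hF : F.card ≤ (A \ B).card) :
    bs.N (f - bs.proj (A ∪ B) f + (bs.minCoef f A : 𝕜) • bs.indSign 1 F) ≤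
      C * bs.N (f - bs.indSign a B) := by
  obtain ⟨R, hR, hRcard⟩ := exists_subset_card_eq hF
  have hzAB : z ∉ A ∪ B := disjoint_left.1 hG hzG
  have hFAB : ∀ j ∈ F, j ∉ A ∪ B := fun j hj => disjoint_left.1 hG (hFG hj)
  have hcg : ∀ m ∉ B, bs.coord m (f - bs.indSign a B) = bs.coord m f := fun m hm => by
    simp [coord_indSign, hm]
  have hrem : f - bs.indSign a B - bs.proj (insert z (A ∪ B)) (f - bs.indSign a B) =
      f - bs.proj (A ∪ B) f := by
    rw [bs.proj_sub, bs.proj_indSign, inter_eq_left.2 (subset_union_right.trans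
      (subset_insert _ _)), bs.proj_insert hzAB, hfG z hzG, zero_smul, zero_add]
    abel
  have hRA : ∀ j ∈ R, j ∈ A := fun j hj => (Finset.mem_sdiff.1 (hR hj)).1
  have hRΓ : R ⊆ insert z (A ∪ B) := fun j hj => mem_insert_of_mem (mem_union_left _ (hRA j hj))
  have hzR : z ∉ R := fun hzR => hzAB (mem_union_left _ (hRA z hzR))
  have hFΓ : Disjoint F (insert z (A ∪ B)) :=
    disjoint_insert_right.2 ⟨hzF, disjoint_left.2 hFAB⟩
  have key := h.N_sub_proj_add_smul_indSign_le (u := f - bs.indSign a B) (ω := 1)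
    (bs.minCoef_nonneg f A) hRΓ (mem_insert_self _ _) hzR hFΓ hRcard.symm (by simp [IsSign])
    (by rw [hcg z (fun hz => hzAB (mem_union_right _ hz)), hfG z hzG])
    (fun j hj => by rw [hcg j (fun hB => hFAB j hj (mem_union_right _ hB)), hfG j (hFG hj)])
    (fun j hj => by
      have hj' := Finset.mem_sdiff.1 (hR hj)
      rw [hcg j hj'.2]
      exact bs.minCoef_le hj'.1)
    (fun j hj => by
      simp only [mem_insert, mem_union, not_or] at hj
      rw [hcg j hj.2.2]
      exact hA.norm_coord_le_minCoef hAne hj.2.1)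
  rwa [hrem] at key

theorem IsRGPCCWith.N_sub_proj_union_add_smul_indSign_le (h : bs.IsRGPCCWith C) (hC : 0 ≤ C)
    {f : X} {A B G D : Finset ℕ} (a : ℕ → 𝕜) {ω : ℕ → 𝕜}
    (hA : bs.IsGreedySet f A) (hAne : A.Nonempty) (hBA : B.card = A.card)
    (hG : Disjoint G (A ∪ B)) (hGcard : (B \ A).card < G.card)
    (hfG : ∀ j ∈ G, bs.coord j f = 0) (hD : D ⊆ B \ A) (hω : IsSign ω D) :
    bs.N (f - bs.proj (A ∪ B) f + (bs.minCoef f A : 𝕜) • bs.indSign ω D) ≤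
      C ^ 2 * bs.N (f - bs.indSign a B) := by
  have hcT : ∀ m, bs.coord m (f - bs.proj (A ∪ B) f) = if m ∈ A ∪ B then 0 else bs.coord m f :=
    fun m => by by_cases hm : m ∈ A ∪ B <;> simp [coord_proj, hm]
  have hDcard := card_le_card hD
  obtain ⟨z, hz⟩ : G.Nonempty := card_pos.1 (by omega)
  obtain ⟨F, hF, hFcard⟩ := exists_subset_card_eq (s := G.erase z) (n := D.card)
    (by rw [card_erase_of_mem hz]; omega)
  have hFG : F ⊆ G := hF.trans (erase_subset _ _)
  have hzF : z ∉ F := fun hzF => by simpa using hF hzF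
  have hDB : ∀ j ∈ D, j ∈ A ∪ B := fun j hj => mem_union_right _ (Finset.mem_sdiff.1 (hD hj)).1
  have h₁ := h.N_sub_proj_union_add_smul_indSign_one_le a hA hAne hG hfG hz hFG hzF
    (by rw [hFcard, ← card_sdiff_comm hBA]; exact hDcard)
  have h₂ := h.N_add_smul_indSign_le_of_vanishing (T := f - bs.proj (A ∪ B) f)
    (bs.minCoef_nonneg f A) hFG hz hzF (disjoint_left.2 fun j hj hjG => disjoint_left.1 hG hjG
      (hDB j hj)) hFcard.symm hω
    (fun j hj => by simp [hcT, disjoint_left.1 hG hj, hfG j hj])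
    (fun j hj => by simp [hcT, hDB j hj])
    (fun j => by
      rw [hcT]
      split_ifs with hj
      · simpa using bs.minCoef_nonneg f A
      · exact hA.norm_coord_le_minCoef hAne fun hjA => hj (mem_union_left _ hjA))
  calc _ ≤ C * bs.N (f - bs.proj (A ∪ B) f + (bs.minCoef f A : 𝕜) • bs.indSign 1 F) := h₂
    _ ≤ C * (C * bs.N (f - bs.indSign a B)) := by gcongr
    _ = C ^ 2 * bs.N (f - bs.indSign a B) := by ring

theorem IsRGPCCWith.rpow_N_sub_proj_le_of_vanishing (h : bs.IsRGPCCWith C) (hC : 0 ≤ C)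
    (hp : 0 < p) (hp1 : p ≤ 1) {f : X} {A B G : Finset ℕ} (a : ℕ → 𝕜)
    (hA : bs.IsGreedySet f A) (hAne : A.Nonempty) (hBA : B.card = A.card)
    (hG : Disjoint G (A ∪ B)) (hGcard : (B \ A).card < G.card)
    (hfG : ∀ j ∈ G, bs.coord j f = 0) :
    bs.N (f - bs.proj A f) ^ p ≤ (2 ^ p - 1)⁻¹ * (C ^ 2 * bs.N (f - bs.indSign a B)) ^ p := by
  have hsplit : f - bs.proj A f =
      f - bs.proj (A ∪ B) f + bs.indSign (fun j => bs.coord j f) (B \ A) := by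
    rw [← proj_eq_indSign, ← union_sdiff_self_eq_union, bs.proj_union disjoint_sdiff]
    abel
  rw [hsplit]
  exact bs.rpow_N_add_indSign_le hp hp1 _ (B \ A)
    (fun D hD ω hω => h.N_sub_proj_union_add_smul_indSign_le hC a hA hAne hBA hG hGcard hfG hD hω)
    fun j hj => hA.norm_coord_le_minCoef hAne (Finset.mem_sdiff.1 hj).2

/-- Removing from `f` a block of far-out, tiny coefficients creates the vanishing coordinates
needed by `rpow_N_sub_proj_le_of_vanishing` at an arbitrarily small cost. -/
theorem IsRGPCCWith.rpow_N_sub_proj_le (h : bs.IsRGPCCWith C) (hC : 0 ≤ C)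
    (hp : 0 < p) (hp1 : p ≤ 1) {f : X} {A B : Finset ℕ} (a : ℕ → 𝕜)
    (hA : bs.IsGreedySet f A) (hAne : A.Nonempty) (hBA : B.card = A.card) :
    bs.N (f - bs.proj A f) ^ p ≤ (2 ^ p - 1)⁻¹ * (C ^ 2 * bs.N (f - bs.indSign a B)) ^ p := by
  have h2p : 1 < (2 : ℝ) ^ p := Real.one_lt_rpow one_lt_two hp
  set K := (2 ^ p - 1)⁻¹ * (C ^ 2) ^ p
  have hK : 0 ≤ K := mul_nonneg (inv_nonneg.2 (by linarith)) (by positivity)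
  have hRHS : ∀ x : X, (2 ^ p - 1)⁻¹ * (C ^ 2 * bs.N x) ^ p = K * bs.N x ^ p := fun x => by
    rw [Real.mul_rpow (by positivity) (bs.N_nonneg x), mul_assoc]
  rw [hRHS]
  refine le_of_forall_pos_le_add fun ε hε => ?_
  obtain ⟨G, hG, hGcard, hGf⟩ := bs.exists_disjoint_rpow_N_proj_le hp f (A ∪ B)
    ((B \ A).card + 1) (η := ε / (K + 1)) (by positivity)
  have hAG : Disjoint A G := (hG.mono_right subset_union_left).symm
  have key := h.rpow_N_sub_proj_le_of_vanishing hC hp hp1 a (hA.sub_proj hAG) hAne hBA hG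
    (by omega) fun j hj => by simp [coord_proj, hj]
  rw [hRHS] at key
  have hrem : f - bs.proj A f = (f - bs.proj G f) - bs.proj A (f - bs.proj G f) + bs.proj G f := by
    rw [bs.proj_sub, bs.proj_eq_zero (x := bs.proj G f) fun n hn => by
      simp [coord_proj, disjoint_left.1 hAG hn]]
    abel
  have hg : f - bs.proj G f - bs.indSign a B = (f - bs.indSign a B) - bs.proj G f := by abel
  calc bs.N (f - bs.proj A f) ^ p
      ≤ bs.N ((f - bs.proj G f) - bs.proj A (f - bs.proj G f)) ^ p + bs.N (bs.proj G f) ^ p := by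
        rw [hrem]; exact bs.N_padd _ _
    _ ≤ K * (bs.N (f - bs.indSign a B) ^ p + ε / (K + 1)) + ε / (K + 1) := by
        rw [hg] at key
        gcongr
        exact key.trans (by gcongr; exact (bs.N_sub_rpow_le _ _).trans (by gcongr))
    _ = K * bs.N (f - bs.indSign a B) ^ p + ε := by
        field_simp
        ring

end RGPCC

end PBasis

lemma le_rpow_neg_one_div_mul_of_rpow_le {p t x y : ℝ} (hp : 0 < p) (ht : 0 < t) (hx : 0 ≤ x)
    (hy : 0 ≤ y) (h : x ^ p ≤ t⁻¹ * y ^ p) : x ≤ t ^ (-(1 / p)) * y := by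
  have ht' : (t ^ (-(1 / p))) ^ p = t⁻¹ := by
    rw [← Real.rpow_mul ht.le, show -(1 / p) * p = -1 by field_simp, Real.rpow_neg_one]
  rwa [← Real.rpow_le_rpow_iff hx (by positivity) hp,
    Real.mul_rpow (by positivity) hy, ht']

open PBasis in
theorem RGPCC_implies_greedy_general {𝕜 : Type*} [RCLike 𝕜] {X : Type*} [AddCommGroup X]
    [Module 𝕜 X] {p : ℝ} (hp : 0 < p) (hp1 : p ≤ 1) (bs : PBasis 𝕜 X p)
    (Cpg : ℝ) (h : bs.IsRGPCCWith Cpg) :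
    bs.IsGreedyWith ((((2 : ℝ) ^ p - 1) ^ (-(1 / p))) ^ 2 * Cpg ^ 2) := by
  have hC := h.one_le
  have ht0 : 0 < (2 : ℝ) ^ p - 1 := by linarith [Real.one_lt_rpow one_lt_two hp]
  have ht1 : (2 : ℝ) ^ p - 1 ≤ 1 := by
    linarith [Real.rpow_le_rpow_of_exponent_le one_le_two hp1, Real.rpow_one (2 : ℝ)]
  set Ap := ((2 : ℝ) ^ p - 1) ^ (-(1 / p))
  have hAp : 1 ≤ Ap := Real.one_le_rpow_of_pos_of_le_one_of_nonpos ht0 ht1 (by simp [hp.le])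
  intro f A B₀ a hA hB₀
  rcases A.eq_empty_or_nonempty with rfl | hAne
  · obtain rfl : B₀ = ∅ := card_eq_zero.1 (Nat.le_zero.1 hB₀)
    simpa [proj] using le_mul_of_one_le_left (bs.N_nonneg f)
      (one_le_mul_of_one_le_of_one_le (one_le_pow₀ hAp) (one_le_pow₀ hC))
  obtain ⟨B, hB₀B, hBcard⟩ := Infinite.exists_superset_card_eq B₀ A.card hB₀
  have key := h.rpow_N_sub_proj_le (zero_le_one.trans hC) hp hp1
    (fun j => if j ∈ B₀ then a j else 0) hA hAne hBcard
  rw [bs.indSign_ite_mem a hB₀B] at key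
  have hg : 0 ≤ Cpg ^ 2 * bs.N (f - bs.indSign a B₀) := mul_nonneg (sq_nonneg _) (bs.N_nonneg _)
  calc bs.N (f - bs.proj A f) ≤ Ap * (Cpg ^ 2 * bs.N (f - bs.indSign a B₀)) :=
        le_rpow_neg_one_div_mul_of_rpow_le hp ht0 (bs.N_nonneg _) hg key
    _ ≤ Ap ^ 2 * (Cpg ^ 2 * bs.N (f - bs.indSign a B₀)) :=
        mul_le_mul_of_nonneg_right (by nlinarith) hg
    _ = _ := by rw [mul_assoc]; rfl

/-- If a basis of a `p`-Banach space is `C_pg`-RGPCC, then it is greedy with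
greedy constant `C_g ≤ A_p² · C_pg²`, where `A_p = (2^p − 1)^{−1/p}`. -/
theorem RGPCC_implies_greedy {𝕜 : Type*} [RCLike 𝕜] {X : Type*} [AddCommGroup X]
    [Module 𝕜 X] {p : ℝ} (hp : 0 < p) (hp1 : p ≤ 1) (bs : PBasis 𝕜 X p)
    (Cpg : ℝ) (hCpg : 0 < Cpg) (h : bs.IsRGPCCWith Cpg) :
    bs.IsGreedyWith ((((2 : ℝ) ^ p - 1) ^ (-(1 / p))) ^ 2 * Cpg ^ 2) :=
  RGPCC_implies_greedy_general hp hp1 bs Cpg h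
end
end

section
/- Let 0 < p ≤ 1, let X be a p-Banach space over 𝔽 = ℝ or ℂ, and let 𝒳 be a basis of X that is C_pgu-URGPCC. Then 𝒳 is democratic with democracy constant D ≤ C_pgu²; that is, ‖𝟙_A‖ ≤ C_pgu²·‖𝟙_B‖ for all finite sets A, B ⊂ ℕ with |A| ≤ |B|. -/
open scoped BigOperators

noncomputable section

/-! Testing `ϱ_m` on `f = 𝟙_S + 𝟙_B + 𝟙_{B \ B₀}`, with `S` disjoint from `B` and `|B₀| = |S|`,
whose greedy set `B` has minimal coefficient `1`, against the set `S ∪ (B \ B₀)` gives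
`‖𝟙_S‖ ≤ C ‖𝟙_B‖` whenever `|S| ≤ |B|`. Passing from `A` to `B` through an auxiliary set of
size `|A|` disjoint from both applies this twice, hence the constant `C²`. -/

theorem Finset.exists_disjoint_card_eq {α : Type*} [Infinite α] (s : Finset α) (n : ℕ) :
    ∃ t : Finset α, Disjoint t s ∧ t.card = n := by
  obtain ⟨t, hts, htn⟩ := s.finite_toSet.infinite_compl.exists_subset_card_eq n
  exact ⟨t, Finset.disjoint_left.mpr fun _ ha => hts ha, htn⟩

namespace PBasis

variable {𝕜 : Type*} [RCLike 𝕜] {X : Type*} [AddCommGroup X] [Module 𝕜 X] {p : ℝ}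
  (bs : PBasis 𝕜 X p)

theorem coord_ind (n : ℕ) (T : Finset ℕ) :
    bs.coord n (bs.ind T) = if n ∈ T then 1 else 0 := by
  simp only [ind, map_sum, bs.biorth, Finset.sum_ite_eq]

@[simp]
theorem ind_empty : bs.ind ∅ = 0 := Finset.sum_empty

theorem ind_union {S T : Finset ℕ} (h : Disjoint S T) : bs.ind (S ∪ T) = bs.ind S + bs.ind T :=
  Finset.sum_union h

theorem proj_add_s7 (A : Finset ℕ) (f g : X) : bs.proj A (f + g) = bs.proj A f + bs.proj A g := by
  simp only [proj, map_add, add_smul, Finset.sum_add_distrib]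

theorem proj_ind (A T : Finset ℕ) : bs.proj A (bs.ind T) = bs.ind (A ∩ T) := by
  simp only [proj, coord_ind, ite_smul, one_smul, zero_smul, Finset.sum_ite_mem]
  rfl

theorem isGreedySet_of_le {f : X} {A : Finset ℕ} (t : ℝ) (hA : ∀ n ∈ A, t ≤ ‖bs.coord n f‖)
    (hAc : ∀ m ∉ A, ‖bs.coord m f‖ ≤ t) : bs.IsGreedySet f A :=
  fun n hn m hm => (hAc m hm).trans (hA n hn)

theorem minCoef_eq_s7 {f : X} {A : Finset ℕ} {t : ℝ} (hmem : ∃ n ∈ A, ‖bs.coord n f‖ = t)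
    (hle : ∀ n ∈ A, t ≤ ‖bs.coord n f‖) : bs.minCoef f A = t := by
  obtain ⟨n, hn, rfl⟩ := hmem
  exact IsLeast.csInf_eq ⟨⟨n, hn, rfl⟩, by rintro _ ⟨m, hm, rfl⟩; exact hle m hm⟩

variable {bs} in
theorem IsURGPCCWith.N_ind_le_of_disjoint {C : ℝ} (h : bs.IsURGPCCWith C) (hC : 0 ≤ C)
    {S B : Finset ℕ} (hSB : Disjoint S B) (hcard : S.card ≤ B.card) :
    bs.N (bs.ind S) ≤ C * bs.N (bs.ind B) := by
  rcases S.eq_empty_or_nonempty with rfl | hS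
  · rw [ind_empty, (bs.N_eq_zero_iff 0).mpr rfl]
    exact mul_nonneg hC (bs.N_nonneg _)
  obtain ⟨B₀, hB₀B, hB₀card⟩ := Finset.exists_subset_card_eq hcard
  obtain ⟨b₀, hb₀⟩ : B₀.Nonempty := Finset.card_pos.mp (hB₀card ▸ hS.card_pos)
  obtain ⟨f, hf⟩ : ∃ f, f = bs.ind S + bs.ind B + bs.ind (B \ B₀) := ⟨_, rfl⟩
  have hcoord (n : ℕ) : bs.coord n f = (if n ∈ S then 1 else 0) + (if n ∈ B then 1 else 0)
      + (if n ∈ B \ B₀ then 1 else 0) := by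
    simp only [hf, map_add, coord_ind]
  have hB : ∀ n ∈ B, 1 ≤ ‖bs.coord n f‖ := by
    intro n hn
    rw [hcoord, if_neg (Finset.disjoint_right.mp hSB hn), if_pos hn]
    split_ifs <;> norm_num
  have hBc : ∀ m ∉ B, ‖bs.coord m f‖ ≤ 1 := by
    intro m hm
    rw [hcoord, if_neg hm, if_neg fun h => hm (Finset.mem_sdiff.mp h).1]
    split_ifs <;> norm_num
  have hmin : bs.minCoef f B = 1 := by
    refine bs.minCoef_eq_s7 ⟨b₀, hB₀B hb₀, ?_⟩ hB
    rw [hcoord, if_neg (Finset.disjoint_right.mp hSB (hB₀B hb₀)), if_pos (hB₀B hb₀),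
      if_neg fun h => (Finset.mem_sdiff.mp h).2 hb₀]
    norm_num
  have hproj : bs.proj B f = bs.ind B + bs.ind (B \ B₀) := by
    simp only [hf, proj_add_s7, proj_ind, Finset.disjoint_iff_inter_eq_empty.mp hSB.symm,
      Finset.inter_self, Finset.inter_eq_right.mpr Finset.sdiff_subset, ind_empty, zero_add]
  have hSB₀ : Disjoint S (B \ B₀) := hSB.mono_right Finset.sdiff_subset
  have hcard' : (S ∪ (B \ B₀)).card = B.card := by
    rw [Finset.card_union_of_disjoint hSB₀, Finset.card_sdiff_of_subset hB₀B, hB₀card]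
    omega
  have key := h f B (S ∪ (B \ B₀)) (bs.isGreedySet_of_le 1 hB hBc) hcard'
  rw [hmin, hproj, bs.ind_union hSB₀, RCLike.ofReal_one, one_smul] at key
  have hfB : f - (bs.ind B + bs.ind (B \ B₀)) = bs.ind S := by rw [hf]; abel
  have hfS : f - (bs.ind S + bs.ind (B \ B₀)) = bs.ind B := by rw [hf]; abel
  rwa [hfB, hfS] at key

end PBasis

theorem URGPCC_implies_democratic_general {𝕜 : Type*} [RCLike 𝕜] {X : Type*} [AddCommGroup X]
    [Module 𝕜 X] {p : ℝ} (bs : PBasis 𝕜 X p)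
    (Cpgu : ℝ) (hCpgu : 0 < Cpgu) (h : bs.IsURGPCCWith Cpgu) :
    bs.IsDemocraticWith (Cpgu ^ 2) := by
  intro A B hAB
  obtain ⟨S, hS, hScard⟩ := (A ∪ B).exists_disjoint_card_eq A.card
  obtain ⟨hSA, hSB⟩ := Finset.disjoint_union_right.mp hS
  calc bs.N (bs.ind A)
      ≤ Cpgu * bs.N (bs.ind S) := h.N_ind_le_of_disjoint hCpgu.le hSA.symm hScard.ge
    _ ≤ Cpgu * (Cpgu * bs.N (bs.ind B)) := by
        gcongr
        exact h.N_ind_le_of_disjoint hCpgu.le hSB (hScard.trans_le hAB)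
    _ = Cpgu ^ 2 * bs.N (bs.ind B) := by ring

/-- If a basis of a `p`-Banach space over `ℝ` or `ℂ` is `C_pgu`-URGPCC, then it
is democratic with democracy constant `D ≤ C_pgu²`. -/
theorem URGPCC_implies_democratic {𝕜 : Type*} [RCLike 𝕜] {X : Type*} [AddCommGroup X]
    [Module 𝕜 X] {p : ℝ} (hp : 0 < p) (hp1 : p ≤ 1) (bs : PBasis 𝕜 X p)
    (Cpgu : ℝ) (hCpgu : 0 < Cpgu) (h : bs.IsURGPCCWith Cpgu) :
    bs.IsDemocraticWith (Cpgu ^ 2) :=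
  URGPCC_implies_democratic_general bs Cpgu hCpgu h
end
end

section
/- Let 0 < p ≤ 1, let X be a p-Banach space over 𝔽 = ℝ, let 𝒳 be a basis of X, and let C > 0. Suppose that ‖f‖ ≤ C·‖f + g‖ for every f ∈ span{𝒳} and every g ∈ span{𝒳} ∩ X_+(𝒳) with supp(f) ∩ supp(g) = ∅. Then ‖f‖ ≤ C²·‖f + g‖ for every f, g ∈ X with supp(f) ∩ supp(g) = ∅; in particular 𝒳 is C²-unconditional. -/
open scoped BigOperators

noncomputable section

section Aux

variable {X : Type*} [AddCommGroup X] [Module ℝ X] {p : ℝ}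

private lemma pb_rpow_helper (hp : 0 < p) {a b D : ℝ} (ha : 0 ≤ a) (hb : 0 ≤ b)
    (H : ∀ ε : ℝ, 0 < ε → a ^ p ≤ b ^ p + D * ε ^ p) : a ≤ b := by
  have hab : a ^ p ≤ b ^ p := by
    refine le_of_forall_pos_le_add (fun δ hδ => ?_)
    set D' : ℝ := max D 1 with hD'def
    have hD' : 0 < D' := lt_of_lt_of_le one_pos (le_max_right _ _)
    have hδD : 0 < δ / D' := div_pos hδ hD'
    have hε : 0 < (δ / D') ^ p⁻¹ := Real.rpow_pos_of_pos hδD _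
    have hεp : ((δ / D') ^ p⁻¹) ^ p = δ / D' := Real.rpow_inv_rpow hδD.le (ne_of_gt hp)
    have h1 := H _ hε
    rw [hεp] at h1
    have h2 : D * (δ / D') ≤ D' * (δ / D') :=
      mul_le_mul_of_nonneg_right (le_max_left _ _) hδD.le
    have h3 : D' * (δ / D') = δ := by field_simp
    linarith
  by_contra hba
  push_neg at hba
  exact absurd hab (not_le.2 (Real.rpow_lt_rpow hb hba hp))

private lemma pb_coord_sum (bs : PBasis ℝ X p) (A : Finset ℕ) (a : ℕ → ℝ) (m : ℕ) :
    bs.coord m (∑ n ∈ A, a n • bs.e n) = if m ∈ A then a m else 0 := by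
  rw [map_sum]
  simp only [map_smul, bs.biorth, smul_eq_mul, mul_ite, mul_one, mul_zero]
  exact Finset.sum_ite_eq A m a

private lemma pb_repr (bs : PBasis ℝ X p) {f : X}
    (hf : f ∈ Submodule.span ℝ (Set.range bs.e)) :
    ∃ A : Finset ℕ, f = ∑ n ∈ A, bs.coord n f • bs.e n := by
  obtain ⟨c, hc⟩ := Finsupp.mem_span_range_iff_exists_finsupp.1 hf
  refine ⟨c.support, ?_⟩
  have hfc : f = ∑ n ∈ c.support, c n • bs.e n := by
    rw [← hc]; rfl
  conv_lhs => rw [hfc]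
  refine Finset.sum_congr rfl fun n hn => ?_
  congr 1
  rw [hfc, pb_coord_sum, if_pos hn]

private lemma pb_sum_mem_span (bs : PBasis ℝ X p) (A : Finset ℕ) (a : ℕ → ℝ) :
    ∑ n ∈ A, a n • bs.e n ∈ Submodule.span ℝ (Set.range bs.e) :=
  Submodule.sum_mem _ fun n _ =>
    Submodule.smul_mem _ _ (Submodule.subset_span ⟨n, rfl⟩)

private lemma pb_N_neg (bs : PBasis ℝ X p) (f : X) : bs.N (-f) = bs.N f := by
  have := bs.N_smul (-1 : ℝ) f
  simpa using this

private lemma pb_N_zero (bs : PBasis ℝ X p) : bs.N 0 = 0 := (bs.N_eq_zero_iff 0).2 rfl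

private lemma pb_N_sum_rpow (hp : 0 < p) (bs : PBasis ℝ X p) (A : Finset ℕ) (v : ℕ → X) :
    bs.N (∑ n ∈ A, v n) ^ p ≤ ∑ n ∈ A, bs.N (v n) ^ p := by
  induction A using Finset.cons_induction with
  | empty => simp [pb_N_zero, Real.zero_rpow (ne_of_gt hp)]
  | cons a s ha ih =>
    rw [Finset.sum_cons, Finset.sum_cons]
    exact le_trans (bs.N_padd _ _) (by linarith)

private lemma pb_proj_sub (bs : PBasis ℝ X p) (A : Finset ℕ) (f g : X) :
    bs.proj A (f - g) = bs.proj A f - bs.proj A g := by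
  simp [PBasis.proj, Finset.sum_sub_distrib, map_sub, sub_smul]

private lemma pb_coord_proj (bs : PBasis ℝ X p) (A : Finset ℕ) (f : X) (m : ℕ) :
    bs.coord m (bs.proj A f) = if m ∈ A then bs.coord m f else 0 :=
  pb_coord_sum bs A _ m

end Aux
/-- (Real case of Lemma 3.2.) If `‖f‖ ≤ C‖f + g‖` for all disjointly
supported `f, g` in the span with `g` having nonnegative coefficients, then
`‖f‖ ≤ C²‖f + g‖` for all disjointly supported `f, g ∈ X`; in particular the basis is
`C²`-unconditional. -/
theorem positive_coeff_implies_unconditional_real {X : Type*} [AddCommGroup X] [Module ℝ X]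
    {p : ℝ} (hp : 0 < p) (hp1 : p ≤ 1) (bs : PBasis ℝ X p) (C : ℝ) (hC : 0 < C)
    (h : ∀ f g : X, f ∈ Submodule.span ℝ (Set.range bs.e) →
      g ∈ Submodule.span ℝ (Set.range bs.e) → (∀ n : ℕ, 0 ≤ bs.coord n g) →
      Disjoint (bs.supp f) (bs.supp g) → bs.N f ≤ C * bs.N (f + g)) :
    (∀ f g : X, Disjoint (bs.supp f) (bs.supp g) → bs.N f ≤ C ^ 2 * bs.N (f + g)) ∧
      bs.IsUncondWith (C ^ 2) := by
  classical
  have hC2 : (0:ℝ) < C ^ 2 := by positivity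
  have hsuppneg : ∀ x : X, bs.supp (-x) = bs.supp x := by
    intro x; ext n; simp [PBasis.supp]
  -- Step 1: the `C²` estimate on the span.
  have spanC2 : ∀ f g : X, f ∈ Submodule.span ℝ (Set.range bs.e) →
      g ∈ Submodule.span ℝ (Set.range bs.e) →
      Disjoint (bs.supp f) (bs.supp g) → bs.N f ≤ C ^ 2 * bs.N (f + g) := by
    intro f g hfs hgs hd
    obtain ⟨A, hA⟩ := pb_repr bs hgs
    set gp : X := ∑ n ∈ A, max (bs.coord n g) 0 • bs.e n with hgpdef
    set gm : X := ∑ n ∈ A, min (bs.coord n g) 0 • bs.e n with hgmdef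
    have hcp : ∀ m, bs.coord m gp = if m ∈ A then max (bs.coord m g) 0 else 0 :=
      fun m => pb_coord_sum bs A _ m
    have hcm : ∀ m, bs.coord m gm = if m ∈ A then min (bs.coord m g) 0 else 0 :=
      fun m => pb_coord_sum bs A _ m
    have hsum : gp + gm = g := by
      conv_rhs => rw [hA]
      rw [hgpdef, hgmdef, ← Finset.sum_add_distrib]
      exact Finset.sum_congr rfl fun n _ => by rw [← add_smul, max_add_min, add_zero]
    have hgpsupp : ∀ m, bs.coord m gp ≠ 0 → 0 < bs.coord m g := by
      intro m hm
      rw [hcp m] at hm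
      by_cases hmA : m ∈ A
      · rw [if_pos hmA] at hm
        rcases lt_or_ge 0 (bs.coord m g) with h' | h'
        · exact h'
        · exact absurd (max_eq_right h') hm
      · rw [if_neg hmA] at hm; exact absurd rfl hm
    have hgmsupp : ∀ m, bs.coord m gm ≠ 0 → bs.coord m g < 0 := by
      intro m hm
      rw [hcm m] at hm
      by_cases hmA : m ∈ A
      · rw [if_pos hmA] at hm
        rcases lt_or_ge (bs.coord m g) 0 with h' | h'
        · exact h'
        · exact absurd (min_eq_right h') hm
      · rw [if_neg hmA] at hm; exact absurd rfl hm
    have hgm_le : ∀ m, bs.coord m gm ≤ 0 := by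
      intro m; rw [hcm m]; split
      · exact min_le_right _ _
      · exact le_refl 0
    have hgp_nonneg : ∀ m, 0 ≤ bs.coord m gp := by
      intro m; rw [hcp m]; split
      · exact le_max_right _ _
      · exact le_refl 0
    have hdm : Disjoint (bs.supp f) (bs.supp gm) := by
      rw [Set.disjoint_left]
      intro m hmf hmgm
      exact Set.disjoint_left.1 hd hmf ((hgmsupp m hmgm).ne)
    have stepA : bs.N f ≤ C * bs.N (f + gm) := by
      have hng : ∀ n, 0 ≤ bs.coord n (-gm) := by
        intro n; rw [map_neg]; linarith [hgm_le n]
      have hdd : Disjoint (bs.supp (-f)) (bs.supp (-gm)) := by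
        rw [hsuppneg, hsuppneg]; exact hdm
      have := h (-f) (-gm) (Submodule.neg_mem _ hfs)
        (Submodule.neg_mem _ (pb_sum_mem_span bs A _)) hng hdd
      rwa [pb_N_neg, ← neg_add, pb_N_neg] at this
    have stepB : bs.N (f + gm) ≤ C * bs.N (f + g) := by
      have hdd : Disjoint (bs.supp (f + gm)) (bs.supp gp) := by
        rw [Set.disjoint_left]
        intro m hm hmgp
        have hpos := hgpsupp m hmgp
        have hmg : bs.coord m g ≠ 0 := hpos.ne'
        have hf0 : bs.coord m f = 0 := by
          by_contra hf0
          exact Set.disjoint_left.1 hd hf0 hmg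
        have hm0 : bs.coord m gm = 0 := by
          rw [hcm m]; split
          · exact min_eq_right hpos.le
          · rfl
        have : bs.coord m (f + gm) = 0 := by rw [map_add, hf0, hm0, add_zero]
        exact hm this
      have := h (f + gm) gp (Submodule.add_mem _ hfs (pb_sum_mem_span bs A _))
        (pb_sum_mem_span bs A _) hgp_nonneg hdd
      have heq : f + gm + gp = f + g := by rw [← hsum]; abel
      rwa [heq] at this
    calc bs.N f ≤ C * bs.N (f + gm) := stepA
      _ ≤ C * (C * bs.N (f + g)) := mul_le_mul_of_nonneg_left stepB hC.le
      _ = C ^ 2 * bs.N (f + g) := by ring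
  -- Step 2: boundedness of the projections (with constant depending on `A`).
  have Kbound : ∀ A : Finset ℕ, ∃ K : ℝ, 0 ≤ K ∧
      ∀ u : X, bs.N (bs.proj A u) ^ p ≤ K * bs.N u ^ p := by
    obtain ⟨c1, hc1⟩ := bs.coord_bdd
    obtain ⟨c2, hc2⟩ := bs.e_bdd
    intro A
    set c1' : ℝ := max c1 0 with hc1'
    set c2' : ℝ := max c2 0 with hc2'
    have hc1'0 : 0 ≤ c1' := le_max_right _ _
    have hc2'0 : 0 ≤ c2' := le_max_right _ _
    refine ⟨A.card * (c1' * c2') ^ p, by positivity, fun u => ?_⟩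
    have step : ∀ n ∈ A, bs.N (bs.coord n u • bs.e n) ^ p ≤ ((c1' * c2') * bs.N u) ^ p := by
      intro n _
      rw [bs.N_smul]
      have h1 : ‖bs.coord n u‖ ≤ c1' * bs.N u :=
        le_trans (hc1 n u) (mul_le_mul_of_nonneg_right (le_max_left _ _) (bs.N_nonneg u))
      have h2 : bs.N (bs.e n) ≤ c2' := le_trans (hc2 n) (le_max_left _ _)
      have h3 : ‖bs.coord n u‖ * bs.N (bs.e n) ≤ (c1' * c2') * bs.N u := by
        calc ‖bs.coord n u‖ * bs.N (bs.e n) ≤ (c1' * bs.N u) * c2' :=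
              mul_le_mul h1 h2 (bs.N_nonneg _) (mul_nonneg hc1'0 (bs.N_nonneg u))
          _ = (c1' * c2') * bs.N u := by ring
      exact Real.rpow_le_rpow (mul_nonneg (norm_nonneg _) (bs.N_nonneg _)) h3 hp.le
    calc bs.N (bs.proj A u) ^ p ≤ ∑ n ∈ A, bs.N (bs.coord n u • bs.e n) ^ p :=
          pb_N_sum_rpow hp bs A _
      _ ≤ ∑ n ∈ A, ((c1' * c2') * bs.N u) ^ p := Finset.sum_le_sum step
      _ = A.card * ((c1' * c2') ^ p * bs.N u ^ p) := by
          rw [Finset.sum_const, nsmul_eq_mul,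
            Real.mul_rpow (mul_nonneg hc1'0 hc2'0) (bs.N_nonneg u)]
      _ = A.card * (c1' * c2') ^ p * bs.N u ^ p := by ring
  -- Step 3: unconditionality with constant `C²`.
  have uncond : ∀ (A : Finset ℕ) (f : X), bs.N (bs.proj A f) ≤ C ^ 2 * bs.N f := by
    intro A f
    obtain ⟨K, hK0, hK⟩ := Kbound A
    have key : ∀ ε : ℝ, 0 < ε →
        bs.N (bs.proj A f) ^ p ≤ (C ^ 2 * bs.N f) ^ p + ((C ^ 2) ^ p + K) * ε ^ p := by
      intro ε hε
      obtain ⟨g, hgs, hg⟩ := bs.dense_span f ε hε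
      have hps : bs.proj A g ∈ Submodule.span ℝ (Set.range bs.e) := pb_sum_mem_span bs A _
      have hdisj : Disjoint (bs.supp (bs.proj A g)) (bs.supp (g - bs.proj A g)) := by
        rw [Set.disjoint_left]
        intro m hm hm'
        have hmA : m ∈ A := by
          by_contra hmA
          exact hm (by rw [pb_coord_proj, if_neg hmA])
        exact hm' (by rw [map_sub, pb_coord_proj, if_pos hmA, sub_self])
      have h5 : bs.N (bs.proj A g) ≤ C ^ 2 * bs.N g := by
        have := spanC2 (bs.proj A g) (g - bs.proj A g) hps
          (Submodule.sub_mem _ hgs hps) hdisj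
        have hq : bs.proj A g + (g - bs.proj A g) = g := by abel
        rwa [hq] at this
      have t1 : bs.N (bs.proj A f) ^ p ≤
          bs.N (bs.proj A g) ^ p + bs.N (bs.proj A (f - g)) ^ p := by
        have hq : bs.proj A f = bs.proj A g + bs.proj A (f - g) := by
          rw [pb_proj_sub]; abel
        rw [hq]; exact bs.N_padd _ _
      have t3 : bs.N (f - g) ^ p ≤ ε ^ p := Real.rpow_le_rpow (bs.N_nonneg _) hg.le hp.le
      have t2 : bs.N (bs.proj A (f - g)) ^ p ≤ K * ε ^ p :=
        le_trans (hK _) (mul_le_mul_of_nonneg_left t3 hK0)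
      have t5 : bs.N g ^ p ≤ bs.N f ^ p + ε ^ p := by
        have hq : g = f + (g - f) := by abel
        have hpadd := bs.N_padd f (g - f)
        rw [← hq] at hpadd
        have hngf : bs.N (g - f) = bs.N (f - g) := by rw [← pb_N_neg bs (f - g), neg_sub]
        rw [hngf] at hpadd
        linarith
      have t6 : bs.N (bs.proj A g) ^ p ≤ (C ^ 2) ^ p * bs.N g ^ p := by
        have := Real.rpow_le_rpow (bs.N_nonneg _) h5 hp.le
        rwa [Real.mul_rpow hC2.le (bs.N_nonneg g)] at this
      have t7 : (C ^ 2) ^ p * bs.N g ^ p ≤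
          (C ^ 2) ^ p * bs.N f ^ p + (C ^ 2) ^ p * ε ^ p := by
        have := mul_le_mul_of_nonneg_left t5 (Real.rpow_nonneg hC2.le p)
        rw [mul_add] at this
        exact this
      have t8 : (C ^ 2 * bs.N f) ^ p = (C ^ 2) ^ p * bs.N f ^ p :=
        Real.mul_rpow hC2.le (bs.N_nonneg f)
      have hd2 : ((C ^ 2) ^ p + K) * ε ^ p = (C ^ 2) ^ p * ε ^ p + K * ε ^ p := by ring
      rw [t8, hd2]
      linarith
    exact pb_rpow_helper hp (bs.N_nonneg _) (mul_nonneg hC2.le (bs.N_nonneg f)) key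
  -- Step 4: the general disjoint-support estimate.
  have main : ∀ f g : X, Disjoint (bs.supp f) (bs.supp g) →
      bs.N f ≤ C ^ 2 * bs.N (f + g) := by
    intro f g hd
    have key : ∀ ε : ℝ, 0 < ε →
        bs.N f ^ p ≤ (C ^ 2 * bs.N (f + g)) ^ p + (1 + 2 * (C ^ 2) ^ p) * ε ^ p := by
      intro ε hε
      obtain ⟨u, hus, hu⟩ := bs.dense_span f ε hε
      obtain ⟨F, hF⟩ := pb_repr bs hus
      set B : Finset ℕ := F.filter (fun n => bs.coord n f ≠ 0) with hB
      have hBF : B ⊆ F := Finset.filter_subset _ _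
      have h1 : bs.proj B (f + g) = bs.proj B f := by
        simp only [PBasis.proj]
        refine Finset.sum_congr rfl fun n hn => ?_
        have hnf : bs.coord n f ≠ 0 := (Finset.mem_filter.1 hn).2
        have hng : bs.coord n g = 0 := by
          by_contra hng
          exact Set.disjoint_left.1 hd hnf hng
        rw [map_add, hng, add_zero]
      have e1 : bs.proj (F \ B) f = 0 := by
        simp only [PBasis.proj]
        refine Finset.sum_eq_zero fun n hn => ?_
        have hn' := Finset.mem_sdiff.1 hn
        have hzero : bs.coord n f = 0 := by
          by_contra hne
          exact hn'.2 (Finset.mem_filter.2 ⟨hn'.1, hne⟩)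
        rw [hzero, zero_smul]
      have e2 : bs.proj (F \ B) u + bs.proj B u = u := by
        simp only [PBasis.proj]
        exact (Finset.sum_sdiff hBF).trans hF.symm
      have hdecomp : f - bs.proj B f =
          (f - u) + bs.proj (F \ B) (u - f) + bs.proj B (u - f) := by
        rw [pb_proj_sub, pb_proj_sub, e1, sub_zero, eq_sub_of_add_eq e2]
        abel
      have hNfu : bs.N (u - f) = bs.N (f - u) := by rw [← pb_N_neg bs (f - u), neg_sub]
      have b1 : bs.N (f - u) ^ p ≤ ε ^ p := Real.rpow_le_rpow (bs.N_nonneg _) hu.le hp.le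
      have b1' : bs.N (u - f) ^ p ≤ ε ^ p := by rw [hNfu]; exact b1
      have projbound : ∀ A : Finset ℕ, bs.N (bs.proj A (u - f)) ^ p ≤ (C ^ 2) ^ p * ε ^ p := by
        intro A
        have h6 := Real.rpow_le_rpow (bs.N_nonneg _) (uncond A (u - f)) hp.le
        rw [Real.mul_rpow hC2.le (bs.N_nonneg _)] at h6
        calc bs.N (bs.proj A (u - f)) ^ p ≤ (C ^ 2) ^ p * bs.N (u - f) ^ p := h6
          _ ≤ (C ^ 2) ^ p * ε ^ p :=
              mul_le_mul_of_nonneg_left b1' (Real.rpow_nonneg hC2.le p)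
      have b4 : bs.N (f - bs.proj B (f + g)) ^ p ≤
          ε ^ p + 2 * ((C ^ 2) ^ p * ε ^ p) := by
        rw [h1, hdecomp]
        have q1 := bs.N_padd ((f - u) + bs.proj (F \ B) (u - f)) (bs.proj B (u - f))
        have q2 := bs.N_padd (f - u) (bs.proj (F \ B) (u - f))
        have p1 := projbound (F \ B)
        have p2 := projbound B
        linarith
      have b6 : bs.N (bs.proj B (f + g)) ^ p ≤ (C ^ 2 * bs.N (f + g)) ^ p :=
        Real.rpow_le_rpow (bs.N_nonneg _) (uncond B (f + g)) hp.le
      have q0 := bs.N_padd (bs.proj B (f + g)) (f - bs.proj B (f + g))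
      have hfeq : bs.proj B (f + g) + (f - bs.proj B (f + g)) = f := by abel
      rw [hfeq] at q0
      have hexp : (1 + 2 * (C ^ 2) ^ p) * ε ^ p = ε ^ p + 2 * ((C ^ 2) ^ p * ε ^ p) := by ring
      rw [hexp]
      linarith
    exact pb_rpow_helper hp (bs.N_nonneg f) (mul_nonneg hC2.le (bs.N_nonneg _)) key
  exact ⟨main, fun A f => uncond A f⟩
end
end
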